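/- arXiv:math/0510124 — 8 statements merged into one kernel-verified Lean document; each statement's English description precedes it below -/
import Mathlib

section
/- (Lemma 2.1, type B.) Let 𝕂 be a field and r, s, t nonzero elements of 𝕂 with t² = rs and with rs⁻¹ not a root of unity. Let n ≥ 2 and let d, d′ ∈ ℤ^n (the doubled ε-coordinates d_i = 2(ε_i, ζ), d′_i = 2(ε_i, η) of two weights ζ, η of so_{2n+1}, so in particular the statement covers all pairs of weights). Suppose that for all 1 ≤ i < n: r^{d_i} s^{d_{i+1}} = r^{d′_i} s^{d′_{i+1}} and r^{d_{i+1}} s^{d_i} = r^{d′_{i+1}} s^{d′_i}; and moreover r^{d_n} t^{−(d_1+⋯+d_n)} = r^{d′_n} t^{−(d′_1+⋯+d′_n)} and s^{d_n} t^{−(d_1+⋯+d_n)} = s^{d′_n} t^{−(d′_1+⋯+d′_n)}. Then d = d′, i.e. ζ = η. (The hypotheses say exactly that the characters ζ̂ and η̂ of the torus part of U_{r,s}(so_{2n+1}) agree on all ω_i and ω′_i.) -/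
private lemma auxB {𝕂 : Type*} [Field 𝕂] {r s : 𝕂} (hr : r ≠ 0) (hs : s ≠ 0)
    (hroot : ∀ k : ℤ, (r * s⁻¹) ^ k = 1 → k = 0) {a b : ℤ}
    (h : r ^ a * s ^ b = r ^ b * s ^ a) : a = b := by
  have h' : r ^ (a - b) = s ^ (a - b) := by
    rw [zpow_sub₀ hr, zpow_sub₀ hs, div_eq_div_iff (zpow_ne_zero _ hr) (zpow_ne_zero _ hs)]
    linear_combination h
  have hone : (r * s⁻¹) ^ (a - b) = 1 := by
    rw [mul_zpow, h', inv_zpow, ← zpow_neg, ← zpow_add₀ hs]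
    simp
  have := hroot _ hone
  omega

/-- Lemma 2.1, type B: if the characters `ζ̂` and `η̂` of the torus part of
`U_{r,s}(so_{2n+1})` agree on all `ω_i` and `ω′_i`, then `ζ = η`.  Here
`d i = 2(ε_{i+1}, ζ)` and `d' i = 2(ε_{i+1}, η)` (`0`-based doubled ε-coordinates),
`t` is a fixed square root of `rs`, and `rs⁻¹` is not a root of unity. -/
theorem stmt5 {𝕂 : Type*} [Field 𝕂] (r s t : 𝕂) (hr : r ≠ 0) (hs : s ≠ 0) (ht : t ≠ 0)
    (hts : t ^ 2 = r * s)
    (hroot : ∀ k : ℤ, (r * s⁻¹) ^ k = 1 → k = 0)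
    (n : ℕ) (hn : 2 ≤ n) (d d' : ℕ → ℤ)
    (h1 : ∀ i : ℕ, i + 1 < n → r ^ d i * s ^ d (i + 1) = r ^ d' i * s ^ d' (i + 1))
    (h2 : ∀ i : ℕ, i + 1 < n → r ^ d (i + 1) * s ^ d i = r ^ d' (i + 1) * s ^ d' i)
    (h3 : r ^ d (n - 1) * t ^ (-(∑ i ∈ Finset.range n, d i)) =
          r ^ d' (n - 1) * t ^ (-(∑ i ∈ Finset.range n, d' i)))
    (h4 : s ^ d (n - 1) * t ^ (-(∑ i ∈ Finset.range n, d i)) =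
          s ^ d' (n - 1) * t ^ (-(∑ i ∈ Finset.range n, d' i))) :
    ∀ i < n, d i = d' i := by
  have hbase : d (n - 1) = d' (n - 1) := by
    apply auxB hr hs hroot
    have h5 := congrArg₂ (· * ·) h3 h4.symm
    have hT : t ^ (-(∑ i ∈ Finset.range n, d i)) ≠ 0 := zpow_ne_zero _ ht
    have hT' : t ^ (-(∑ i ∈ Finset.range n, d' i)) ≠ 0 := zpow_ne_zero _ ht
    apply mul_right_cancel₀ (mul_ne_zero hT hT')
    linear_combination h5
  have key : ∀ m, m < n → d (n - 1 - m) = d' (n - 1 - m) := by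
    intro m
    induction m with
    | zero => intro _; simpa using hbase
    | succ m ih =>
      intro hm
      have hprev : d (n - 1 - m) = d' (n - 1 - m) := ih (by omega)
      have hi1 : n - 1 - (m + 1) + 1 = n - 1 - m := by omega
      have hlt : n - 1 - (m + 1) + 1 < n := by omega
      have e1 := h1 _ hlt
      have e2 := h2 _ hlt
      rw [hi1, hprev] at e1 e2
      have hr1 : r ^ d (n - 1 - (m + 1)) = r ^ d' (n - 1 - (m + 1)) :=
        mul_right_cancel₀ (zpow_ne_zero _ hs) e1
      have hs1 : s ^ d (n - 1 - (m + 1)) = s ^ d' (n - 1 - (m + 1)) :=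
        mul_left_cancel₀ (zpow_ne_zero _ hr) e2
      apply auxB hr hs hroot
      rw [hr1, hs1]
  intro i hi
  have h' := key (n - 1 - i) (by omega)
  have heq : n - 1 - (n - 1 - i) = i := by omega
  rwa [heq] at h'
end

section
/- (Lemma 2.1, type C.) Let 𝕂 be a field and r, s nonzero elements of 𝕂 with rs⁻¹ not a root of unity. Let n ≥ 2 and let c, c′ ∈ ℤ^n (the ε-coordinates of two weights ζ, η of sp_{2n}). Suppose that for all 1 ≤ i < n: r^{c_i} s^{c_{i+1}} = r^{c′_i} s^{c′_{i+1}} and r^{c_{i+1}} s^{c_i} = r^{c′_{i+1}} s^{c′_i}; and moreover r^{2c_n} (rs)^{−(c_1+⋯+c_n)} = r^{2c′_n} (rs)^{−(c′_1+⋯+c′_n)} and s^{2c_n} (rs)^{−(c_1+⋯+c_n)} = s^{2c′_n} (rs)^{−(c′_1+⋯+c′_n)}. Then c = c′, i.e. ζ = η. (The hypotheses say exactly that the characters ζ̂ and η̂ of the torus part of U_{r,s}(sp_{2n}) agree on all ω_i and ω′_i.) -/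
/-- Lemma 2.1, type C: if the characters `ζ̂` and `η̂` of the torus part of
`U_{r,s}(sp_{2n})` agree on all `ω_i` and `ω′_i`, then `ζ = η`.  Here
`c i = (ε_{i+1}, ζ)` and `c' i = (ε_{i+1}, η)` (`0`-based ε-coordinates of
the two weights) and `rs⁻¹` is not a root of unity. -/
theorem stmt6 {𝕂 : Type*} [Field 𝕂] (r s : 𝕂) (hr : r ≠ 0) (hs : s ≠ 0)
    (hroot : ∀ k : ℤ, (r * s⁻¹) ^ k = 1 → k = 0)
    (n : ℕ) (hn : 2 ≤ n) (c c' : ℕ → ℤ)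
    (h1 : ∀ i : ℕ, i + 1 < n → r ^ c i * s ^ c (i + 1) = r ^ c' i * s ^ c' (i + 1))
    (h2 : ∀ i : ℕ, i + 1 < n → r ^ c (i + 1) * s ^ c i = r ^ c' (i + 1) * s ^ c' i)
    (h3 : r ^ (2 * c (n - 1)) * (r * s) ^ (-(∑ i ∈ Finset.range n, c i)) =
          r ^ (2 * c' (n - 1)) * (r * s) ^ (-(∑ i ∈ Finset.range n, c' i)))
    (h4 : s ^ (2 * c (n - 1)) * (r * s) ^ (-(∑ i ∈ Finset.range n, c i)) =
          s ^ (2 * c' (n - 1)) * (r * s) ^ (-(∑ i ∈ Finset.range n, c' i))) :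
    ∀ i < n, c i = c' i := by
  have hrs : r * s⁻¹ ≠ 0 := mul_ne_zero hr (inv_ne_zero hs)
  -- key cancellation lemma
  have key2 : ∀ a b : ℤ, r ^ a * s ^ b = r ^ b * s ^ a → a = b := by
    intro a b h
    have hab : (r * s⁻¹) ^ a = (r * s⁻¹) ^ b := by
      rw [mul_zpow, mul_zpow, inv_zpow, inv_zpow]
      have hsa : (s : 𝕂) ^ a ≠ 0 := zpow_ne_zero _ hs
      have hsb : (s : 𝕂) ^ b ≠ 0 := zpow_ne_zero _ hs
      field_simp
      linear_combination h
    have h0 : (r * s⁻¹) ^ (a - b) = 1 := by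
      rw [zpow_sub₀ hrs, hab, div_self (zpow_ne_zero _ hrs)]
    have := hroot (a - b) h0
    omega
  -- step differences
  have hd : ∀ i : ℕ, i + 1 < n → c i - c (i + 1) = c' i - c' (i + 1) := by
    intro i hi
    have e1 := h1 i hi
    have e2 := h2 i hi
    have := key2 (c i + c' (i + 1)) (c' i + c (i + 1)) (by
      rw [zpow_add₀ hr, zpow_add₀ hr, zpow_add₀ hs, zpow_add₀ hs]
      linear_combination (r ^ c' (i + 1) * s ^ c' i) * e1 -
        (r ^ c' i * s ^ c' (i + 1)) * e2)
    omega
  -- last coordinate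
  have hlast : c (n - 1) = c' (n - 1) := by
    set X := (r * s) ^ (-(∑ i ∈ Finset.range n, c i)) with hX
    set Y := (r * s) ^ (-(∑ i ∈ Finset.range n, c' i)) with hY
    have hXne : X ≠ 0 := zpow_ne_zero _ (mul_ne_zero hr hs)
    have hYne : Y ≠ 0 := zpow_ne_zero _ (mul_ne_zero hr hs)
    have hcc : r ^ (2 * c (n - 1)) * s ^ (2 * c' (n - 1)) * (X * Y) =
        r ^ (2 * c' (n - 1)) * s ^ (2 * c (n - 1)) * (X * Y) := by
      linear_combination (s ^ (2 * c' (n - 1)) * Y) * h3 -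
        (r ^ (2 * c' (n - 1)) * Y) * h4
    have := key2 (2 * c (n - 1)) (2 * c' (n - 1))
      (mul_right_cancel₀ (mul_ne_zero hXne hYne) hcc)
    omega
  have hstep : ∀ k, k ≤ n - 1 → c (n - 1 - k) = c' (n - 1 - k) := by
    intro k
    induction k with
    | zero => intro _; simpa using hlast
    | succ k ih =>
      intro hk
      have h1' := ih (by omega)
      have h2' := hd (n - 1 - (k + 1)) (by omega)
      have e : n - 1 - (k + 1) + 1 = n - 1 - k := by omega
      rw [e] at h2'
      omega
  intro i hi
  have h := hstep (n - 1 - i) (by omega)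
  rw [show n - 1 - (n - 1 - i) = i from by omega] at h
  exact h
end

section
/- (Lemma 2.1, type D.) Let 𝕂 be a field and u, v nonzero elements of 𝕂, set r = u², s = v², and assume rs⁻¹ is not a root of unity. Let n ≥ 2 and let d, d′ ∈ ℤ^n (the doubled ε-coordinates d_i = 2(ε_i, ζ), d′_i = 2(ε_i, η) of two weights ζ, η of so_{2n}). Suppose that for all 1 ≤ i < n: u^{d_i} v^{d_{i+1}} = u^{d′_i} v^{d′_{i+1}} and u^{d_{i+1}} v^{d_i} = u^{d′_{i+1}} v^{d′_i}; and moreover, writing K = d_1+⋯+d_{n−1} − d_n and K′ = d′_1+⋯+d′_{n−1} − d′_n: u^{d_{n−1}} v^{−d_n} (uv)^{−K} = u^{d′_{n−1}} v^{−d′_n} (uv)^{−K′} and u^{−d_n} v^{d_{n−1}} (uv)^{−K} = u^{−d′_n} v^{d′_{n−1}} (uv)^{−K′}. Then d = d′, i.e. ζ = η. (The hypotheses say exactly that the characters ζ̂ and η̂ of the torus part of U_{r,s}(so_{2n}) agree on all ω_i and ω′_i.) -/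
/-- Lemma 2.1, type D: if the characters `ζ̂` and `η̂` of the torus part of
`U_{r,s}(so_{2n})` agree on all `ω_i` and `ω′_i`, then `ζ = η`.  Here
`d i = 2(ε_{i+1}, ζ)` and `d' i = 2(ε_{i+1}, η)` (`0`-based doubled
ε-coordinates), `u, v` are fixed square roots of `r, s`, and `rs⁻¹` is not a
root of unity. -/
theorem stmt7 {𝕂 : Type*} [Field 𝕂] (u v : 𝕂) (hu : u ≠ 0) (hv : v ≠ 0)
    (hroot : ∀ k : ℤ, (u ^ 2 * (v ^ 2)⁻¹) ^ k = 1 → k = 0)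
    (n : ℕ) (hn : 2 ≤ n) (d d' : ℕ → ℤ)
    (h1 : ∀ i : ℕ, i + 1 < n → u ^ d i * v ^ d (i + 1) = u ^ d' i * v ^ d' (i + 1))
    (h2 : ∀ i : ℕ, i + 1 < n → u ^ d (i + 1) * v ^ d i = u ^ d' (i + 1) * v ^ d' i)
    (h3 : u ^ d (n - 2) * v ^ (-(d (n - 1))) *
            (u * v) ^ (-((∑ i ∈ Finset.range (n - 1), d i) - d (n - 1))) =
          u ^ d' (n - 2) * v ^ (-(d' (n - 1))) *
            (u * v) ^ (-((∑ i ∈ Finset.range (n - 1), d' i) - d' (n - 1))))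
    (h4 : u ^ (-(d (n - 1))) * v ^ d (n - 2) *
            (u * v) ^ (-((∑ i ∈ Finset.range (n - 1), d i) - d (n - 1))) =
          u ^ (-(d' (n - 1))) * v ^ d' (n - 2) *
            (u * v) ^ (-((∑ i ∈ Finset.range (n - 1), d' i) - d' (n - 1)))) :
    ∀ i < n, d i = d' i := by
  have hu2 : ∀ m : ℤ, u ^ m ≠ 0 := fun m => zpow_ne_zero m hu
  have hv2 : ∀ m : ℤ, v ^ m ≠ 0 := fun m => zpow_ne_zero m hv
  -- key: u^m = v^m → m = 0
  have key : ∀ m : ℤ, u ^ m = v ^ m → m = 0 := by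
    intro m hm
    apply hroot m
    have e1 : (u * v⁻¹) ^ m = 1 := by
      rw [mul_zpow, inv_zpow, hm, mul_inv_cancel₀ (hv2 m)]
    have h0 : u ^ 2 * (v ^ 2)⁻¹ = (u * v⁻¹) ^ (2 : ℕ) := by
      rw [mul_pow, inv_pow]
    have hq : ((u * v⁻¹) ^ (2 : ℕ)) ^ m = ((u * v⁻¹) ^ m) ^ (2 : ℕ) := by
      rw [← zpow_natCast (u * v⁻¹) 2, ← zpow_mul, mul_comm ((2:ℕ):ℤ) m, zpow_mul, zpow_natCast]
    rw [h0, hq, e1, one_pow]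
  -- aux : divide
  have aux : ∀ a b a' b' : ℤ, u ^ a * v ^ b = u ^ a' * v ^ b' →
      u ^ (a - a') = v ^ (b' - b) := by
    intro a b a' b' h
    rw [zpow_sub₀ hu, zpow_sub₀ hv, div_eq_div_iff (hu2 _) (hv2 _)]
    linear_combination h
  have stepA : ∀ j : ℕ, j + 1 < n → d j - d' j = d (j + 1) - d' (j + 1) := by
    intro j hj
    have P := aux _ _ _ _ (h1 j hj)
    have Q := aux _ _ _ _ (h2 j hj)
    -- Q : u ^ (d (j+1) - d' (j+1)) = v ^ (d' j - d j)
    have hX : u ^ ((d j - d' j) - (d (j+1) - d' (j+1))) =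
        v ^ ((d j - d' j) - (d (j+1) - d' (j+1))) := by
      rw [zpow_sub₀ hu, P, Q, ← zpow_sub₀ hv]
      congr 1
      ring
    have := key _ hX
    omega
  -- step B
  set K : ℤ := (∑ i ∈ Finset.range (n - 1), d i) - d (n - 1) with hK
  set K' : ℤ := (∑ i ∈ Finset.range (n - 1), d' i) - d' (n - 1) with hK'
  have hW : (u * v) ^ (-K) ≠ 0 := zpow_ne_zero _ (mul_ne_zero hu hv)
  have hW' : (u * v) ^ (-K') ≠ 0 := zpow_ne_zero _ (mul_ne_zero hu hv)
  have h5 : (u ^ d (n-2) * v ^ (-(d (n-1))) *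
      (u ^ (-(d' (n-1))) * v ^ d' (n-2))) * ((u*v) ^ (-K) * (u*v) ^ (-K')) =
      (u ^ d' (n-2) * v ^ (-(d' (n-1))) *
      (u ^ (-(d (n-1))) * v ^ d (n-2))) * ((u*v) ^ (-K) * (u*v) ^ (-K')) := by
    have h5' : (u ^ d (n-2) * v ^ (-(d (n-1))) * (u*v) ^ (-K)) *
        (u ^ (-(d' (n-1))) * v ^ d' (n-2) * (u*v) ^ (-K')) =
        (u ^ d' (n-2) * v ^ (-(d' (n-1))) * (u*v) ^ (-K')) *
        (u ^ (-(d (n-1))) * v ^ d (n-2) * (u*v) ^ (-K)) := by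
      rw [h3, h4]
    linear_combination h5'
  have h6 := mul_right_cancel₀ (mul_ne_zero hW hW') h5
  have h7 : u ^ (d (n-2) + -(d' (n-1))) * v ^ (-(d (n-1)) + d' (n-2)) =
      u ^ (d' (n-2) + -(d (n-1))) * v ^ (-(d' (n-1)) + d (n-2)) := by
    rw [zpow_add₀ hu, zpow_add₀ hv, zpow_add₀ hu, zpow_add₀ hv]
    linear_combination h6
  have h8 := aux _ _ _ _ h7
  have h9 : u ^ ((d (n-2) + -(d' (n-1))) - (d' (n-2) + -(d (n-1)))) =
      v ^ ((d (n-2) + -(d' (n-1))) - (d' (n-2) + -(d (n-1)))) := by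
    rw [h8]
    congr 1
    ring
  have hB := key _ h9
  -- e(n-2) = e(n-1)
  have hnn : n - 2 + 1 = n - 1 := by omega
  have hA := stepA (n - 2) (by omega)
  rw [hnn] at hA
  have hlast1 : d (n-1) = d' (n-1) := by omega
  have hlast2 : d (n-2) = d' (n-2) := by omega
  have zero : ∀ k : ℕ, k ≤ n - 1 → d (n - 1 - k) - d' (n - 1 - k) = 0 := by
    intro k
    induction k with
    | zero => intro _; simp only [Nat.sub_zero]; omega
    | succ k ih =>
      intro hk
      have h' : n - 1 - (k + 1) + 1 = n - 1 - k := by omega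
      have hc := stepA (n - 1 - (k + 1)) (by omega)
      rw [h'] at hc
      rw [hc]
      exact ih (by omega)
  intro i hi
  have := zero (n - 1 - i) (by omega)
  have hii : n - 1 - (n - 1 - i) = i := by omega
  rw [hii] at this
  omega
end

section
/- Let 𝕂 be a field, r and s nonzero in 𝕂 with r ≠ s, and let φ, φ′ be nonzero elements of 𝕂. Then the 𝕂-vector space with basis {v_j : j ∈ ℕ} carries a (unique) U_{r,s}(sl_2)-module structure in which ω.v_j = φ(rs⁻¹)⁻ʲ v_j, ω′.v_j = φ′(rs⁻¹)ʲ v_j, f.v_j = [j+1] v_{j+1}, and e.v_j = ((r^{1−j}φ − s^{1−j}φ′)/(r − s)) v_{j−1} (with v_{−1} = 0). (This realizes the Verma module M(φ) of highest weight (φ, φ′) via the basis v_j = f^j/[j]! ⊗ v_φ used in Proposition 2.9.) -/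
/-- Generators of `U_{r,s}(sl_2)`: `e`, `f`, `ω`, `ω⁻¹`, `ω′`, `ω′⁻¹`. -/
inductive UGen : Type
  | e | f | w | winv | w' | w'inv

open FreeAlgebra in
/-- The defining relations of `U_{r,s}(sl_2)`. -/
inductive URel (𝕂 : Type) [Field 𝕂] (r s : 𝕂) :
    FreeAlgebra 𝕂 UGen → FreeAlgebra 𝕂 UGen → Prop
  | winv_right : URel 𝕂 r s (ι 𝕂 .w * ι 𝕂 .winv) 1
  | winv_left : URel 𝕂 r s (ι 𝕂 .winv * ι 𝕂 .w) 1
  | w'inv_right : URel 𝕂 r s (ι 𝕂 .w' * ι 𝕂 .w'inv) 1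
  | w'inv_left : URel 𝕂 r s (ι 𝕂 .w'inv * ι 𝕂 .w') 1
  | ww' : URel 𝕂 r s (ι 𝕂 .w * ι 𝕂 .w') (ι 𝕂 .w' * ι 𝕂 .w)
  | we : URel 𝕂 r s (ι 𝕂 .w * ι 𝕂 .e) ((r * s⁻¹) • (ι 𝕂 .e * ι 𝕂 .w))
  | wf : URel 𝕂 r s (ι 𝕂 .w * ι 𝕂 .f) ((r⁻¹ * s) • (ι 𝕂 .f * ι 𝕂 .w))
  | w'e : URel 𝕂 r s (ι 𝕂 .w' * ι 𝕂 .e) ((r⁻¹ * s) • (ι 𝕂 .e * ι 𝕂 .w'))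
  | w'f : URel 𝕂 r s (ι 𝕂 .w' * ι 𝕂 .f) ((r * s⁻¹) • (ι 𝕂 .f * ι 𝕂 .w'))
  | ef : URel 𝕂 r s (ι 𝕂 .e * ι 𝕂 .f - ι 𝕂 .f * ι 𝕂 .e)
      ((r - s)⁻¹ • (ι 𝕂 .w - ι 𝕂 .w'))

/-- The two-parameter quantum group `U_{r,s}(sl_2)`: the quotient of the free
algebra on the six generators by the defining relations. -/
abbrev Ursl2 (𝕂 : Type) [Field 𝕂] (r s : 𝕂) : Type := RingQuot (URel 𝕂 r s)

/-- The image of a generator in `U_{r,s}(sl_2)`. -/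
def UGen.toU {𝕂 : Type} [Field 𝕂] (r s : 𝕂) (x : UGen) : Ursl2 𝕂 r s :=
  RingQuot.mkAlgHom 𝕂 (URel 𝕂 r s) (FreeAlgebra.ι 𝕂 x)

/-- The quantum integer `[m] = (rᵐ − sᵐ)/(r − s)`. -/
def qInt {𝕂 : Type} [Field 𝕂] (r s : 𝕂) (m : ℕ) : 𝕂 := (r ^ m - s ^ m) / (r - s)

/-!
On the basis `v_j`, `ω` and `ω′` act diagonally, `f` raises and `e` lowers the index, so every
defining relation becomes an identity between weighted shift operators, and these reduce to
identities between their weights. The relations with `ω` and `ω′` say that the diagonal weights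
change by the factor `r⁻¹s` (resp. `rs⁻¹`) at each step; for `ef − fe`, which is diagonal with
entries `[j+1]c_j − [j]c_{j−1}` (`c_j` the coefficient of `e.v_{j+1}`), it is the identity
`[j+1]c_j − [j]c_{j−1} = (φ(rs⁻¹)^{−j} − φ′(rs⁻¹)^j)/(r − s)`. Uniqueness: `ω⁻¹` and `ω′⁻¹` are
inverses of `ω` and `ω′`, so an algebra map out of `U_{r,s}(sl_2)` is determined by the images
of `e`, `f`, `ω`, `ω′`, and these are determined by their values on the basis.
-/

section WeightedShift

variable {R : Type*} [CommSemiring R]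

noncomputable def diagOp {ι : Type*} (g : ι → R) : Module.End R (ι →₀ R) :=
  Finsupp.lsum R fun j => g j • Finsupp.lsingle j

noncomputable def raiseOp (g : ℕ → R) : Module.End R (ℕ →₀ R) :=
  Finsupp.lsum R fun j => g j • Finsupp.lsingle (j + 1)

noncomputable def lowerOp (g : ℕ → R) : Module.End R (ℕ →₀ R) :=
  Finsupp.lsum R fun j => Nat.casesOn j 0 fun k => g k • Finsupp.lsingle k

@[simp] lemma diagOp_single {ι : Type*} (g : ι → R) (j : ι) (x : R) :
    diagOp g (Finsupp.single j x) = Finsupp.single j (g j * x) := by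
  simp [diagOp]

@[simp] lemma raiseOp_single (g : ℕ → R) (j : ℕ) (x : R) :
    raiseOp g (Finsupp.single j x) = Finsupp.single (j + 1) (g j * x) := by
  simp [raiseOp]

@[simp] lemma lowerOp_single_zero (g : ℕ → R) (x : R) :
    lowerOp g (Finsupp.single 0 x) = 0 := by
  simp [lowerOp]

@[simp] lemma lowerOp_single_succ (g : ℕ → R) (k : ℕ) (x : R) :
    lowerOp g (Finsupp.single (k + 1) x) = Finsupp.single k (g k * x) := by
  simp [lowerOp]

lemma diagOp_one {ι : Type*} : diagOp (1 : ι → R) = 1 :=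
  Finsupp.lhom_ext fun _ _ => by
    rw [diagOp_single, Pi.one_apply, one_mul, Module.End.one_apply]

lemma diagOp_mul_diagOp {ι : Type*} (g h : ι → R) : diagOp g * diagOp h = diagOp (g * h) :=
  Finsupp.lhom_ext fun _ _ => by
    rw [Module.End.mul_apply, diagOp_single, diagOp_single, diagOp_single, Pi.mul_apply, mul_assoc]

lemma smul_diagOp {ι : Type*} (c : R) (g : ι → R) : c • diagOp g = diagOp (c • g) :=
  Finsupp.lhom_ext fun _ _ => by
    rw [LinearMap.smul_apply, diagOp_single, diagOp_single, Finsupp.smul_single, smul_eq_mul,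
      Pi.smul_apply, smul_eq_mul, mul_assoc]

lemma diagOp_mul_raiseOp {g : ℕ → R} {c : R} (hg : ∀ j, g (j + 1) = c * g j) (h : ℕ → R) :
    diagOp g * raiseOp h = c • (raiseOp h * diagOp g) :=
  Finsupp.lhom_ext fun j x => by
    simp only [Module.End.mul_apply, LinearMap.smul_apply, diagOp_single, raiseOp_single,
      Finsupp.smul_single, smul_eq_mul, hg]
    ring_nf

lemma diagOp_mul_lowerOp {g : ℕ → R} {c : R} (hg : ∀ k, g k = c * g (k + 1)) (h : ℕ → R) :
    diagOp g * lowerOp h = c • (lowerOp h * diagOp g) := by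
  refine Finsupp.lhom_ext fun j x => ?_
  cases j with
  | zero =>
    simp only [Module.End.mul_apply, LinearMap.smul_apply, diagOp_single, lowerOp_single_zero,
      map_zero, smul_zero]
  | succ k =>
    simp only [Module.End.mul_apply, LinearMap.smul_apply, diagOp_single, lowerOp_single_succ,
      Finsupp.smul_single, smul_eq_mul]
    rw [hg k]
    ring_nf

end WeightedShift

lemma diagOp_sub {R ι : Type*} [CommRing R] (g h : ι → R) :
    diagOp (g - h) = diagOp g - diagOp h :=
  Finsupp.lhom_ext fun _ _ => by
    rw [LinearMap.sub_apply, diagOp_single, diagOp_single, diagOp_single, Pi.sub_apply, sub_mul,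
      Finsupp.single_sub]

lemma lowerOp_mul_raiseOp_sub {R : Type*} [CommRing R] {g h d : ℕ → R}
    (h₀ : d 0 = h 0 * g 0) (hsucc : ∀ k, d (k + 1) = h (k + 1) * g (k + 1) - g k * h k) :
    lowerOp h * raiseOp g - raiseOp g * lowerOp h = diagOp d := by
  refine Finsupp.lhom_ext fun j x => ?_
  cases j with
  | zero =>
    simp only [LinearMap.sub_apply, Module.End.mul_apply, raiseOp_single, lowerOp_single_succ,
      lowerOp_single_zero, diagOp_single, map_zero, sub_zero, h₀, mul_assoc]
  | succ k =>
    simp only [LinearMap.sub_apply, Module.End.mul_apply, raiseOp_single, lowerOp_single_succ,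
      diagOp_single, ← Finsupp.single_sub, hsucc]
    ring_nf

lemma diagOp_mul_diagOp_inv {K ι : Type*} [Field K] {g : ι → K} (hg : ∀ j, g j ≠ 0) :
    diagOp g * diagOp g⁻¹ = 1 := by
  rw [diagOp_mul_diagOp, ← diagOp_one]
  exact congrArg diagOp (funext fun j => mul_inv_cancel₀ (hg j))

lemma diagOp_inv_mul_diagOp {K ι : Type*} [Field K] {g : ι → K} (hg : ∀ j, g j ≠ 0) :
    diagOp g⁻¹ * diagOp g = 1 := by
  rw [diagOp_mul_diagOp, ← diagOp_one]
  exact congrArg diagOp (funext fun j => inv_mul_cancel₀ (hg j))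

lemma map_inverse_eq_of_map_eq {F M N : Type*} [Monoid M] [Monoid N] [FunLike F M N]
    [MonoidHomClass F M N] {ρ σ : F} {a b : M} (hab : a * b = 1) (hba : b * a = 1)
    (h : ρ a = σ a) : ρ b = σ b :=
  (left_inv_eq_right_inv (a := ρ a) (by rw [h, ← map_mul, hba, map_one])
    (by rw [← map_mul, hab, map_one])).symm

namespace Ursl2

variable {𝕂 : Type} [Field 𝕂] {r s : 𝕂} {A : Type*} [Semiring A] [Algebra 𝕂 A]

noncomputable def lift (g : UGen → A)
    (hg : ∀ ⦃x y⦄, URel 𝕂 r s x y → FreeAlgebra.lift 𝕂 g x = FreeAlgebra.lift 𝕂 g y) :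
    Ursl2 𝕂 r s →ₐ[𝕂] A :=
  RingQuot.liftAlgHom 𝕂 ⟨FreeAlgebra.lift 𝕂 g, hg⟩

@[simp] lemma lift_toU (g : UGen → A)
    (hg : ∀ ⦃x y⦄, URel 𝕂 r s x y → FreeAlgebra.lift 𝕂 g x = FreeAlgebra.lift 𝕂 g y)
    (a : UGen) : lift g hg (a.toU r s) = g a := by
  rw [lift, UGen.toU, RingQuot.liftAlgHom_mkAlgHom_apply, FreeAlgebra.lift_ι_apply]

lemma toU_mul_toU_eq_one {a b : UGen}
    (h : URel 𝕂 r s (FreeAlgebra.ι 𝕂 a * FreeAlgebra.ι 𝕂 b) 1) : a.toU r s * b.toU r s = 1 := by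
  rw [UGen.toU, UGen.toU, ← map_mul, RingQuot.mkAlgHom_rel 𝕂 h, map_one]

lemma algHom_ext {ρ σ : Ursl2 𝕂 r s →ₐ[𝕂] A}
    (he : ρ (UGen.e.toU r s) = σ (UGen.e.toU r s)) (hf : ρ (UGen.f.toU r s) = σ (UGen.f.toU r s))
    (hw : ρ (UGen.w.toU r s) = σ (UGen.w.toU r s))
    (hw' : ρ (UGen.w'.toU r s) = σ (UGen.w'.toU r s)) : ρ = σ := by
  have key : ∀ a : UGen, ρ (a.toU r s) = σ (a.toU r s)
    | .e => he
    | .f => hf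
    | .w => hw
    | .w' => hw'
    | .winv => map_inverse_eq_of_map_eq (toU_mul_toU_eq_one .winv_right)
        (toU_mul_toU_eq_one .winv_left) hw
    | .w'inv => map_inverse_eq_of_map_eq (toU_mul_toU_eq_one .w'inv_right)
        (toU_mul_toU_eq_one .w'inv_left) hw'
  exact RingQuot.ringQuot_ext' 𝕂 ρ σ (FreeAlgebra.hom_ext (funext key))

end Ursl2

namespace Verma

variable {𝕂 : Type} [Field 𝕂] (r s φ φ' : 𝕂)

noncomputable def omegaWeight (j : ℕ) : 𝕂 := φ * (r * s⁻¹) ^ (-(j : ℤ))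

noncomputable def omega'Weight (j : ℕ) : 𝕂 := φ' * (r * s⁻¹) ^ (j : ℤ)

noncomputable def eCoeff (k : ℕ) : 𝕂 := (r ^ (-(k : ℤ)) * φ - s ^ (-(k : ℤ)) * φ') / (r - s)

noncomputable def genOp : UGen → Module.End 𝕂 (ℕ →₀ 𝕂)
  | .e => lowerOp (eCoeff r s φ φ')
  | .f => raiseOp fun j => qInt r s (j + 1)
  | .w => diagOp (omegaWeight r s φ)
  | .winv => diagOp (omegaWeight r s φ)⁻¹
  | .w' => diagOp (omega'Weight r s φ')
  | .w'inv => diagOp (omega'Weight r s φ')⁻¹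

variable {r s φ φ'}

lemma omegaWeight_ne_zero (hr : r ≠ 0) (hs : s ≠ 0) (hφ : φ ≠ 0) (j : ℕ) :
    omegaWeight r s φ j ≠ 0 := by
  unfold omegaWeight
  positivity

lemma omega'Weight_ne_zero (hr : r ≠ 0) (hs : s ≠ 0) (hφ' : φ' ≠ 0) (j : ℕ) :
    omega'Weight r s φ' j ≠ 0 := by
  unfold omega'Weight
  positivity

lemma omegaWeight_succ (hr : r ≠ 0) (hs : s ≠ 0) (j : ℕ) :
    omegaWeight r s φ (j + 1) = r⁻¹ * s * omegaWeight r s φ j := by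
  simp only [omegaWeight, Nat.cast_succ, neg_add, zpow_add₀ (mul_ne_zero hr (inv_ne_zero hs)),
    zpow_neg_one, mul_inv, inv_inv]
  ring

lemma omegaWeight_eq_mul_succ (hr : r ≠ 0) (hs : s ≠ 0) (k : ℕ) :
    omegaWeight r s φ k = r * s⁻¹ * omegaWeight r s φ (k + 1) := by
  rw [omegaWeight_succ hr hs]
  field_simp

lemma omega'Weight_succ (hr : r ≠ 0) (hs : s ≠ 0) (j : ℕ) :
    omega'Weight r s φ' (j + 1) = r * s⁻¹ * omega'Weight r s φ' j := by
  simp only [omega'Weight, Nat.cast_succ, zpow_add_one₀ (mul_ne_zero hr (inv_ne_zero hs))]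
  ring

lemma omega'Weight_eq_mul_succ (hr : r ≠ 0) (hs : s ≠ 0) (k : ℕ) :
    omega'Weight r s φ' k = r⁻¹ * s * omega'Weight r s φ' (k + 1) := by
  rw [omega'Weight_succ hr hs]
  field_simp

lemma eCoeff_zero_mul_qInt_one (hrs : r ≠ s) :
    eCoeff r s φ φ' 0 * qInt r s 1 = (r - s)⁻¹ * (omegaWeight r s φ 0 - omega'Weight r s φ' 0) := by
  have : r - s ≠ 0 := sub_ne_zero.mpr hrs
  simp only [eCoeff, qInt, omegaWeight, omega'Weight, Nat.cast_zero, neg_zero, zpow_zero]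
  field_simp

lemma eCoeff_succ_mul_qInt_sub (hr : r ≠ 0) (hs : s ≠ 0) (hrs : r ≠ s) (k : ℕ) :
    eCoeff r s φ φ' (k + 1) * qInt r s (k + 1 + 1) - qInt r s (k + 1) * eCoeff r s φ φ' k =
      (r - s)⁻¹ * (omegaWeight r s φ (k + 1) - omega'Weight r s φ' (k + 1)) := by
  have : r - s ≠ 0 := sub_ne_zero.mpr hrs
  simp only [eCoeff, qInt, omegaWeight, omega'Weight, zpow_neg, zpow_natCast, mul_pow, inv_pow]
  field_simp
  ring

lemma genOp_rel (hr : r ≠ 0) (hs : s ≠ 0) (hrs : r ≠ s) (hφ : φ ≠ 0) (hφ' : φ' ≠ 0) :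
    ∀ ⦃x y⦄, URel 𝕂 r s x y →
      FreeAlgebra.lift 𝕂 (genOp r s φ φ') x = FreeAlgebra.lift 𝕂 (genOp r s φ φ') y := by
  intro x y h
  cases h <;> simp only [map_mul, map_one, map_smul, map_sub, FreeAlgebra.lift_ι_apply, genOp]
  case winv_right => exact diagOp_mul_diagOp_inv (omegaWeight_ne_zero hr hs hφ)
  case winv_left => exact diagOp_inv_mul_diagOp (omegaWeight_ne_zero hr hs hφ)
  case w'inv_right => exact diagOp_mul_diagOp_inv (omega'Weight_ne_zero hr hs hφ')
  case w'inv_left => exact diagOp_inv_mul_diagOp (omega'Weight_ne_zero hr hs hφ')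
  case ww' => rw [diagOp_mul_diagOp, diagOp_mul_diagOp, mul_comm]
  case we => exact diagOp_mul_lowerOp (omegaWeight_eq_mul_succ hr hs) _
  case wf => exact diagOp_mul_raiseOp (omegaWeight_succ hr hs) _
  case w'e => exact diagOp_mul_lowerOp (omega'Weight_eq_mul_succ hr hs) _
  case w'f => exact diagOp_mul_raiseOp (omega'Weight_succ hr hs) _
  case ef =>
    rw [← diagOp_sub, smul_diagOp]
    exact lowerOp_mul_raiseOp_sub (eCoeff_zero_mul_qInt_one hrs).symm
      fun k => (eCoeff_succ_mul_qInt_sub hr hs hrs k).symm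

end Verma

/-- The Verma module `M(φ)` of `U_{r,s}(sl_2)`: the `𝕂`-vector space with basis
`{v_j : j ∈ ℕ}` carries a unique `U_{r,s}(sl_2)`-module structure (i.e. there is a
unique algebra homomorphism into its `𝕂`-linear endomorphisms) in which
`ω.v_j = φ(rs⁻¹)⁻ʲ v_j`, `ω′.v_j = φ′(rs⁻¹)ʲ v_j`, `f.v_j = [j+1] v_{j+1}` and
`e.v_j = ((r^{1−j}φ − s^{1−j}φ′)/(r − s)) v_{j−1}` (with `v_{−1} = 0`). -/
theorem stmt9 {𝕂 : Type} [Field 𝕂] (r s : 𝕂) (hr : r ≠ 0) (hs : s ≠ 0) (hrs : r ≠ s)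
    (φ φ' : 𝕂) (hφ : φ ≠ 0) (hφ' : φ' ≠ 0) :
    ∃! ρ : Ursl2 𝕂 r s →ₐ[𝕂] Module.End 𝕂 (ℕ →₀ 𝕂),
      (∀ j : ℕ, ρ (UGen.toU r s .w) (Finsupp.single j 1) =
        (φ * (r * s⁻¹) ^ (-(j : ℤ))) • Finsupp.single j 1) ∧
      (∀ j : ℕ, ρ (UGen.toU r s .w') (Finsupp.single j 1) =
        (φ' * (r * s⁻¹) ^ (j : ℤ)) • Finsupp.single j 1) ∧
      (∀ j : ℕ, ρ (UGen.toU r s .f) (Finsupp.single j 1) =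
        qInt r s (j + 1) • Finsupp.single (j + 1) 1) ∧
      (ρ (UGen.toU r s .e) (Finsupp.single 0 1) = 0) ∧
      (∀ j : ℕ, ρ (UGen.toU r s .e) (Finsupp.single (j + 1) 1) =
        ((r ^ (-(j : ℤ)) * φ - s ^ (-(j : ℤ)) * φ') / (r - s)) • Finsupp.single j 1) := by
  refine ⟨Ursl2.lift (Verma.genOp r s φ φ') (Verma.genOp_rel hr hs hrs hφ hφ'), ?_, ?_⟩
  · simp [Verma.genOp, Verma.omegaWeight, Verma.omega'Weight, Verma.eCoeff]
  · rintro ρ ⟨hw, hw', hf, he₀, he⟩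
    refine Ursl2.algHom_ext ?_ ?_ ?_ ?_ <;> refine Finsupp.basisSingleOne.ext fun j => ?_ <;>
      simp only [Finsupp.coe_basisSingleOne, Ursl2.lift_toU, Verma.genOp]
    · cases j
      · rw [he₀, lowerOp_single_zero]
      · rw [he, lowerOp_single_succ, Finsupp.smul_single_one, mul_one, Verma.eCoeff]
    · rw [hf, raiseOp_single, Finsupp.smul_single_one, mul_one]
    · rw [hw, diagOp_single, Finsupp.smul_single_one, mul_one, Verma.omegaWeight]
    · rw [hw', diagOp_single, Finsupp.smul_single_one, mul_one, Verma.omega'Weight]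
end

section
/- (Proposition 2.9(i).) Let 𝕂 be a field, r and s nonzero in 𝕂 with rs⁻¹ not a root of unity, and let φ, φ′ be nonzero elements of 𝕂. The Verma module M(φ, φ′) is a simple U_{r,s}(sl_2)-module if and only if φ·r^{−j} − φ′·s^{−j} ≠ 0 for every integer j ≥ 0. -/
open Module

section Invariant

variable {R A M : Type*} [CommSemiring R] [Ring A] [Algebra R A] [AddCommGroup M] [Module R M]

theorem isSimpleModule_compHom_iff (ρ : A →ₐ[R] End R M) :
    (letI := Module.compHom M ρ.toRingHom; IsSimpleModule A M) ↔
      Nontrivial M ∧ ∀ P : Submodule R M, (∀ a, ∀ m ∈ P, ρ a m ∈ P) → P = ⊥ ∨ P = ⊤ := by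
  let := Module.compHom M ρ.toRingHom
  have smul_mem (N : Submodule A M) (c : R) {m : M} (hm : m ∈ N) : c • m ∈ N := by
    have : c • m = algebraMap R A c • m := by
      change _ = ρ _ m
      rw [AlgHom.commutes, Module.algebraMap_end_apply]
    exact this ▸ N.smul_mem _ hm
  let ofInvariant (P : Submodule R M) (hP : ∀ a, ∀ m ∈ P, ρ a m ∈ P) : Submodule A M :=
    { P.toAddSubmonoid with smul_mem' := fun a m hm => hP a m hm }
  let toInvariant (N : Submodule A M) : Submodule R M :=
    { N.toAddSubmonoid with smul_mem' := fun c m hm => smul_mem N c hm }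
  rw [isSimpleModule_iff]
  constructor
  · intro _
    refine ⟨(Submodule.nontrivial_iff A).mp inferInstance, fun P hP => ?_⟩
    refine (eq_bot_or_eq_top (ofInvariant P hP : Submodule A M)).imp ?_ ?_ <;>
      exact fun h => Submodule.ext fun m => (SetLike.ext_iff.mp h m :)
  · rintro ⟨_, hsimple⟩
    have : Nontrivial (Submodule A M) := (Submodule.nontrivial_iff A).mpr ‹_›
    refine ⟨fun N => ?_⟩
    refine (hsimple (toInvariant N) fun a m hm => N.smul_mem a hm).imp ?_ ?_ <;>
      exact fun h => Submodule.ext fun m => (SetLike.ext_iff.mp h m :)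

theorem RingQuot.apply_mem_of_forall_ι {X : Type*}
    {rel : FreeAlgebra R X → FreeAlgebra R X → Prop} (ρ : RingQuot rel →ₐ[R] End R M)
    {P : Submodule R M}
    (hP : ∀ x, ∀ m ∈ P, ρ (RingQuot.mkAlgHom R rel (FreeAlgebra.ι R x)) m ∈ P)
    (a : RingQuot rel) : ∀ m ∈ P, ρ a m ∈ P := by
  obtain ⟨b, rfl⟩ := RingQuot.mkAlgHom_surjective R rel a
  induction b using FreeAlgebra.induction with
  | grade0 c =>
    intro m hm
    rw [AlgHom.commutes, AlgHom.commutes, Module.algebraMap_end_apply]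
    exact P.smul_mem c hm
  | grade1 x => exact hP x
  | mul a b ha hb =>
    intro m hm
    rw [map_mul, map_mul, Module.End.mul_apply]
    exact ha _ (hb m hm)
  | add a b ha hb =>
    intro m hm
    rw [map_add, map_add, LinearMap.add_apply]
    exact P.add_mem (ha m hm) (hb m hm)

end Invariant

section Eigenvectors

variable {K ι M : Type*} [Field K] [AddCommGroup M] [Module K M] (v : Basis ι K M)
  {T : End K M} {d : ι → K}

theorem Module.Basis.repr_apply_of_forall_eq_smul (hT : ∀ i, T (v i) = d i • v i) (x : M)
    (i : ι) : v.repr (T x) i = d i * v.repr x i := by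
  classical
  have : (Finsupp.lapply i ∘ₗ v.repr.toLinearMap) ∘ₗ T =
      d i • (Finsupp.lapply i ∘ₗ v.repr.toLinearMap) := by
    refine v.ext fun j => ?_
    simp only [LinearMap.comp_apply, LinearEquiv.coe_coe, hT, map_smul, v.repr_self,
      LinearMap.smul_apply, Finsupp.lapply_apply, Finsupp.single_apply]
    split_ifs with h <;> simp [h]
  exact LinearMap.congr_fun this x

theorem Module.Basis.exists_mem_of_forall_eq_smul (hd : Function.Injective d)
    (hT : ∀ i, T (v i) = d i • v i) {P : Submodule K M} (hP : ∀ m ∈ P, T m ∈ P)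
    (hP0 : P ≠ ⊥) : ∃ i, v i ∈ P := by
  classical
  obtain ⟨x, hxP, hx0⟩ := Submodule.exists_mem_ne_zero_of_ne_bot hP0
  induction hn : (v.repr x).support.card using Nat.strong_induction_on generalizing x with
  | _ n ih =>
    obtain ⟨k, hk⟩ : (v.repr x).support.Nonempty := by simpa using hx0
    set y := T x - d k • x
    have hyP : y ∈ P := P.sub_mem (hP x hxP) (P.smul_mem _ hxP)
    have hy (i : ι) : v.repr y i = (d i - d k) * v.repr x i := by
      simp only [y, map_sub, map_smul, Finsupp.sub_apply, Finsupp.smul_apply,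
        v.repr_apply_of_forall_eq_smul hT, smul_eq_mul, sub_mul]
    by_cases hy0 : y = 0
    · have hx : v.repr x = Finsupp.single k (v.repr x k) := by
        ext i
        by_cases hik : i = k
        · simp [hik]
        · have : (d i - d k) * v.repr x i = 0 := by rw [← hy, hy0, map_zero, Finsupp.zero_apply]
          rw [Finsupp.single_eq_of_ne hik]
          exact (mul_eq_zero.mp this).resolve_left (sub_ne_zero.mpr (hd.ne hik))
      have hxk : x = v.repr x k • v k := by rw [← v.repr_symm_single, ← hx, v.repr.symm_apply_apply]
      rw [hxk] at hxP
      exact ⟨k, (P.smul_mem_iff (Finsupp.mem_support_iff.mp hk)).mp hxP⟩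
    · refine ih _ ?_ y hyP hy0 rfl
      calc (v.repr y).support.card < (v.repr x).support.card := by
            refine Finset.card_lt_card ⟨fun i hi => ?_, fun h => ?_⟩
            · rw [Finsupp.mem_support_iff, hy] at hi
              exact Finsupp.mem_support_iff.mpr (right_ne_zero_of_mul hi)
            · have := Finsupp.mem_support_iff.mp (h hk)
              rw [hy, sub_self, zero_mul] at this
              exact this rfl
        _ = n := hn

variable {S : End K M} {x : M} {c : K}

theorem Module.End.eigenvalue_ne_zero_of_mul_eq_one (hST : S * T = 1) (hx : x ≠ 0)
    (hT : T x = c • x) : c ≠ 0 := by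
  rintro rfl
  apply hx
  calc x = (S * T) x := by rw [hST]; rfl
    _ = 0 := by rw [Module.End.mul_apply, hT, zero_smul, map_zero]

theorem Module.End.apply_eq_inv_smul_of_mul_eq_one (hST : S * T = 1) (hx : x ≠ 0)
    (hT : T x = c • x) : S x = c⁻¹ • x := by
  rw [eq_inv_smul_iff₀ (eigenvalue_ne_zero_of_mul_eq_one hST hx hT), ← map_smul, ← hT,
    ← Module.End.mul_apply, hST]
  rfl

end Eigenvectors

section Arithmetic

variable {𝕂 : Type} [Field 𝕂]

theorem zpow_neg_natCast_injective {q : 𝕂} (hq : q ≠ 0) (hroot : ∀ k : ℤ, q ^ k = 1 → k = 0) :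
    Function.Injective fun j : ℕ => q ^ (-(j : ℤ)) := by
  intro j k (h : q ^ (-(j : ℤ)) = q ^ (-(k : ℤ)))
  have : q ^ ((k : ℤ) - j) = 1 := by
    rw [sub_eq_add_neg, zpow_add₀ hq, h, ← zpow_add₀ hq, add_neg_cancel, zpow_zero]
  have := hroot _ this
  omega

variable {r s : 𝕂}

theorem pow_ne_pow_of_not_rootOfUnity (hs : s ≠ 0) (hroot : ∀ k : ℤ, (r * s⁻¹) ^ k = 1 → k = 0)
    {m : ℕ} (hm : m ≠ 0) : r ^ m ≠ s ^ m := by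
  intro h
  apply hm
  exact_mod_cast hroot m
    (by rw [zpow_natCast, mul_pow, inv_pow, h, mul_inv_cancel₀ (pow_ne_zero m hs)])

theorem sub_ne_zero_of_not_rootOfUnity (hs : s ≠ 0)
    (hroot : ∀ k : ℤ, (r * s⁻¹) ^ k = 1 → k = 0) : r - s ≠ 0 :=
  sub_ne_zero.mpr (by simpa using pow_ne_pow_of_not_rootOfUnity hs hroot one_ne_zero)

theorem qInt_succ_ne_zero (hs : s ≠ 0) (hroot : ∀ k : ℤ, (r * s⁻¹) ^ k = 1 → k = 0) (m : ℕ) :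
    qInt r s (m + 1) ≠ 0 :=
  div_ne_zero (sub_ne_zero.mpr (pow_ne_pow_of_not_rootOfUnity hs hroot m.succ_ne_zero))
    (sub_ne_zero_of_not_rootOfUnity hs hroot)

end Arithmetic

theorem UGen.toU_mul_toU_eq_one {𝕂 : Type} [Field 𝕂] {r s : 𝕂} {g g' : UGen}
    (h : URel 𝕂 r s (FreeAlgebra.ι 𝕂 g * FreeAlgebra.ι 𝕂 g') 1) :
    UGen.toU r s g * UGen.toU r s g' = 1 := by
  rw [UGen.toU, UGen.toU, ← map_mul, RingQuot.mkAlgHom_rel 𝕂 h, map_one]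

structure IsVermaBasis {𝕂 : Type} [Field 𝕂] {r s : 𝕂} {M : Type} [AddCommGroup M] [Module 𝕂 M]
    (ρ : Ursl2 𝕂 r s →ₐ[𝕂] End 𝕂 M) (φ φ' : 𝕂) (v : Basis ℕ 𝕂 M) : Prop where
  w : ∀ j : ℕ, ρ (UGen.toU r s .w) (v j) = (φ * (r * s⁻¹) ^ (-(j : ℤ))) • v j
  w' : ∀ j : ℕ, ρ (UGen.toU r s .w') (v j) = (φ' * (r * s⁻¹) ^ (j : ℤ)) • v j
  f : ∀ j : ℕ, ρ (UGen.toU r s .f) (v j) = qInt r s (j + 1) • v (j + 1)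
  e_succ : ∀ j : ℕ, ρ (UGen.toU r s .e) (v (j + 1)) =
    ((r ^ (-(j : ℤ)) * φ - s ^ (-(j : ℤ)) * φ') / (r - s)) • v j

namespace IsVermaBasis

variable {𝕂 : Type} [Field 𝕂] {r s : 𝕂} {M : Type} [AddCommGroup M] [Module 𝕂 M]
  {ρ : Ursl2 𝕂 r s →ₐ[𝕂] End 𝕂 M} {φ φ' : 𝕂} {v : Basis ℕ 𝕂 M}

theorem weight_ne_zero (hV : IsVermaBasis ρ φ φ' v) (j : ℕ) : φ * (r * s⁻¹) ^ (-(j : ℤ)) ≠ 0 :=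
  End.eigenvalue_ne_zero_of_mul_eq_one
    (by rw [← map_mul, UGen.toU_mul_toU_eq_one .winv_left, map_one]) (v.ne_zero j) (hV.w j)

theorem ne_zero (hV : IsVermaBasis ρ φ φ' v) : φ ≠ 0 := by simpa using hV.weight_ne_zero 0

theorem rs_ne_zero (hV : IsVermaBasis ρ φ φ' v) : r * s⁻¹ ≠ 0 :=
  fun h => hV.weight_ne_zero 1 (by simp [h])

theorem s_ne_zero (hV : IsVermaBasis ρ φ φ' v) : s ≠ 0 :=
  fun h => hV.rs_ne_zero (by rw [h, inv_zero, mul_zero])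

theorem winv (hV : IsVermaBasis ρ φ φ' v) (j : ℕ) :
    ρ (UGen.toU r s .winv) (v j) = (φ * (r * s⁻¹) ^ (-(j : ℤ)))⁻¹ • v j :=
  End.apply_eq_inv_smul_of_mul_eq_one
    (by rw [← map_mul, UGen.toU_mul_toU_eq_one .winv_left, map_one]) (v.ne_zero j) (hV.w j)

theorem w'inv (hV : IsVermaBasis ρ φ φ' v) (j : ℕ) :
    ρ (UGen.toU r s .w'inv) (v j) = (φ' * (r * s⁻¹) ^ (j : ℤ))⁻¹ • v j :=
  End.apply_eq_inv_smul_of_mul_eq_one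
    (by rw [← map_mul, UGen.toU_mul_toU_eq_one .w'inv_left, map_one]) (v.ne_zero j) (hV.w' j)

theorem weight_injective (hV : IsVermaBasis ρ φ φ' v)
    (hroot : ∀ k : ℤ, (r * s⁻¹) ^ k = 1 → k = 0) :
    Function.Injective fun j : ℕ => φ * (r * s⁻¹) ^ (-(j : ℤ)) :=
  (mul_right_injective₀ hV.ne_zero).comp (zpow_neg_natCast_injective hV.rs_ne_zero hroot)

theorem apply_mem_span_Ioi (hV : IsVermaBasis ρ φ φ' v) {j : ℕ}
    (hj : φ * r ^ (-(j : ℤ)) - φ' * s ^ (-(j : ℤ)) = 0) (g : UGen) :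
    ∀ m ∈ Submodule.span 𝕂 (v '' Set.Ioi j),
      ρ (UGen.toU r s g) m ∈ Submodule.span 𝕂 (v '' Set.Ioi j) := by
  set P := Submodule.span 𝕂 (v '' Set.Ioi j)
  have hv (k : ℕ) (hk : j < k) : v k ∈ P := Submodule.subset_span ⟨k, hk, rfl⟩
  suffices h : ∀ k, j < k → ρ (UGen.toU r s g) (v k) ∈ P from
    fun m hm => (Submodule.span_le (p := P.comap _)).mpr
      (by rintro _ ⟨k, hk, rfl⟩; exact h k hk) hm
  intro k hk
  cases g with
  | e =>
    obtain ⟨i, rfl⟩ : ∃ i, k = i + 1 := ⟨k - 1, by omega⟩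
    rw [hV.e_succ i]
    rcases (Nat.lt_succ_iff.mp hk).eq_or_lt with rfl | hi
    · rw [mul_comm, mul_comm (s ^ _), hj, zero_div, zero_smul]
      exact P.zero_mem
    · exact P.smul_mem _ (hv i hi)
  | f => exact hV.f k ▸ P.smul_mem _ (hv _ (by omega))
  | w => exact hV.w k ▸ P.smul_mem _ (hv k hk)
  | winv => exact hV.winv k ▸ P.smul_mem _ (hv k hk)
  | w' => exact hV.w' k ▸ P.smul_mem _ (hv k hk)
  | w'inv => exact hV.w'inv k ▸ P.smul_mem _ (hv k hk)

theorem exists_invariant_ne_bot_ne_top (hV : IsVermaBasis ρ φ φ' v) {j : ℕ}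
    (hj : φ * r ^ (-(j : ℤ)) - φ' * s ^ (-(j : ℤ)) = 0) :
    ∃ P : Submodule 𝕂 M, (∀ a, ∀ m ∈ P, ρ a m ∈ P) ∧ P ≠ ⊥ ∧ P ≠ ⊤ := by
  refine ⟨Submodule.span 𝕂 (v '' Set.Ioi j),
    RingQuot.apply_mem_of_forall_ι ρ (hV.apply_mem_span_Ioi hj), fun h => ?_, fun h => ?_⟩
  · have : v (j + 1) ∈ Submodule.span 𝕂 (v '' Set.Ioi j) :=
      Submodule.subset_span ⟨j + 1, j.lt_succ_self, rfl⟩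
    exact v.ne_zero _ ((Submodule.mem_bot 𝕂).mp (h ▸ this))
  · exact v.linearIndependent.notMem_span_image (by simp) (h ▸ Submodule.mem_top (x := v 0))

theorem eq_top_of_invariant (hV : IsVermaBasis ρ φ φ' v)
    (hroot : ∀ k : ℤ, (r * s⁻¹) ^ k = 1 → k = 0)
    (hcond : ∀ j : ℕ, φ * r ^ (-(j : ℤ)) - φ' * s ^ (-(j : ℤ)) ≠ 0) {P : Submodule 𝕂 M}
    (hP : ∀ a, ∀ m ∈ P, ρ a m ∈ P) (hP0 : P ≠ ⊥) : P = ⊤ := by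
  obtain ⟨j, hj⟩ := v.exists_mem_of_forall_eq_smul (hV.weight_injective hroot) hV.w (hP _) hP0
  have lower (i : ℕ) (hi : v (i + 1) ∈ P) : v i ∈ P := by
    have := hP (UGen.toU r s .e) _ hi
    rw [hV.e_succ i] at this
    have hr_s := sub_ne_zero_of_not_rootOfUnity hV.s_ne_zero hroot
    refine (P.smul_mem_iff (div_ne_zero ?_ hr_s)).mp this
    rw [mul_comm, mul_comm (s ^ _)]
    exact hcond i
  have raise (i : ℕ) (hi : v i ∈ P) : v (i + 1) ∈ P := by
    have := hP (UGen.toU r s .f) _ hi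
    rwa [hV.f i, P.smul_mem_iff (qInt_succ_ne_zero hV.s_ne_zero hroot i)] at this
  have hv0 : v 0 ∈ P := Nat.decreasingInduction (fun i _ => lower i) hj (Nat.zero_le j)
  have hv (i : ℕ) : v i ∈ P := Nat.rec hv0 (fun i hi => raise i hi) i
  rw [eq_top_iff, ← v.span_eq, Submodule.span_le]
  rintro _ ⟨i, rfl⟩
  exact hv i

end IsVermaBasis

theorem stmt10_general {𝕂 : Type} [Field 𝕂] (r s : 𝕂)
    (hroot : ∀ k : ℤ, (r * s⁻¹) ^ k = 1 → k = 0)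
    (φ φ' : 𝕂)
    (M : Type) [AddCommGroup M] [Module 𝕂 M] (v : Module.Basis ℕ 𝕂 M)
    (ρ : Ursl2 𝕂 r s →ₐ[𝕂] Module.End 𝕂 M)
    (hw : ∀ j : ℕ, ρ (UGen.toU r s .w) (v j) = (φ * (r * s⁻¹) ^ (-(j : ℤ))) • v j)
    (hw' : ∀ j : ℕ, ρ (UGen.toU r s .w') (v j) = (φ' * (r * s⁻¹) ^ (j : ℤ)) • v j)
    (hf : ∀ j : ℕ, ρ (UGen.toU r s .f) (v j) = qInt r s (j + 1) • v (j + 1))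
    (he : ∀ j : ℕ, ρ (UGen.toU r s .e) (v (j + 1)) =
      ((r ^ (-(j : ℤ)) * φ - s ^ (-(j : ℤ)) * φ') / (r - s)) • v j) :
    (letI : Module (Ursl2 𝕂 r s) M := Module.compHom M ρ.toRingHom
     IsSimpleModule (Ursl2 𝕂 r s) M) ↔
      ∀ j : ℕ, φ * r ^ (-(j : ℤ)) - φ' * s ^ (-(j : ℤ)) ≠ 0 := by
  have hV : IsVermaBasis ρ φ φ' v := ⟨hw, hw', hf, he⟩
  refine (isSimpleModule_compHom_iff ρ).trans ⟨fun ⟨_, hsimple⟩ j hj => ?_, fun hcond => ?_⟩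
  · obtain ⟨P, hP, hbot, htop⟩ := hV.exists_invariant_ne_bot_ne_top hj
    exact (hsimple P hP).elim hbot htop
  · exact ⟨nontrivial_of_ne (v 0) 0 (v.ne_zero 0),
      fun P hP => or_iff_not_imp_left.mpr (hV.eq_top_of_invariant hroot hcond hP)⟩

/-- Proposition 2.9(i): the Verma module `M(φ, φ′)` — here given by any `𝕂`-vector
space `M` with basis `(v_j)_{j ∈ ℕ}` and a representation `ρ` of `U_{r,s}(sl_2)`
with `ω.v_j = φ(rs⁻¹)⁻ʲ v_j`, `ω′.v_j = φ′(rs⁻¹)ʲ v_j`, `f.v_j = [j+1] v_{j+1}`,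
`e.v_j = ((r^{1−j}φ − s^{1−j}φ′)/(r − s)) v_{j−1}` (`v_{−1} = 0`) — is a simple
`U_{r,s}(sl_2)`-module if and only if `φ r^{−j} − φ′ s^{−j} ≠ 0` for every `j ≥ 0`. -/
theorem stmt10 {𝕂 : Type} [Field 𝕂] (r s : 𝕂) (hr : r ≠ 0) (hs : s ≠ 0)
    (hroot : ∀ k : ℤ, (r * s⁻¹) ^ k = 1 → k = 0)
    (φ φ' : 𝕂) (hφ : φ ≠ 0) (hφ' : φ' ≠ 0)
    (M : Type) [AddCommGroup M] [Module 𝕂 M] (v : Module.Basis ℕ 𝕂 M)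
    (ρ : Ursl2 𝕂 r s →ₐ[𝕂] Module.End 𝕂 M)
    (hw : ∀ j : ℕ, ρ (UGen.toU r s .w) (v j) = (φ * (r * s⁻¹) ^ (-(j : ℤ))) • v j)
    (hw' : ∀ j : ℕ, ρ (UGen.toU r s .w') (v j) = (φ' * (r * s⁻¹) ^ (j : ℤ)) • v j)
    (hf : ∀ j : ℕ, ρ (UGen.toU r s .f) (v j) = qInt r s (j + 1) • v (j + 1))
    (he0 : ρ (UGen.toU r s .e) (v 0) = 0)
    (he : ∀ j : ℕ, ρ (UGen.toU r s .e) (v (j + 1)) =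
      ((r ^ (-(j : ℤ)) * φ - s ^ (-(j : ℤ)) * φ') / (r - s)) • v j) :
    (letI : Module (Ursl2 𝕂 r s) M := Module.compHom M ρ.toRingHom
     IsSimpleModule (Ursl2 𝕂 r s) M) ↔
      ∀ j : ℕ, φ * r ^ (-(j : ℤ)) - φ' * s ^ (-(j : ℤ)) ≠ 0 :=
  stmt10_general r s hroot φ φ' M v ρ hw hw' hf he
end

section
/- (Proposition 2.9(ii), classification part.) Let 𝕂 be an algebraically closed field, r and s nonzero in 𝕂 with rs⁻¹ not a root of unity, and m ≥ 0 an integer. Then every simple U_{r,s}(sl_2)-module of 𝕂-dimension m+1 is isomorphic to the module L(φ) for some nonzero φ ∈ 𝕂, where L(φ) is the (m+1)-dimensional module with basis v_0, …, v_m and action ω.v_j = φ(rs⁻¹)⁻ʲ v_j, ω′.v_j = φ(rs⁻¹)^{−(m−j)} v_j, e.v_j = φ r^{−m}[m+1−j] v_{j−1} (v_{−1} = 0), f.v_j = [j+1] v_{j+1} (v_{m+1} = 0). -/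
/-- The family `v_0, …, v_m` attached to a basis `b` of an `(m+1)`-dimensional
space, extended by `v_j = 0` for `j > m` (so `v_{−1} = v_{m+1} = 0`). -/
noncomputable def extb {𝕂 M : Type} [Field 𝕂] [AddCommGroup M] [Module 𝕂 M] {m : ℕ}
    (b : Module.Basis (Fin (m + 1)) 𝕂 M) (j : ℕ) : M :=
  if h : j < m + 1 then b ⟨j, h⟩ else 0

/-!
Since `q = rs⁻¹` is not a root of unity and `ωe = q eω`, the operator `e` multiplies
`ω`-eigenvalues by `q`; an endomorphism has finitely many eigenvalues, so some eigenspace of `ω`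
is killed by `e`, and it contains an eigenvector `v` of the commuting `ω′`. The vectors `fʲ v`
span a submodule, hence all of `M`, and their `ω`-eigenvalues `φ q⁻ʲ` are distinct, so
`f^{m+1} v = 0` while `v, f v, …, fᵐ v` is a basis. The relation `ef - fe = (ω - ω′)/(r - s)`
gives `e fʲ⁺¹ v = (r - s)⁻¹ ∑_{i ≤ j} (φ q⁻ⁱ - β qⁱ) fʲ v`; for `j = m` this vanishes, which
forces `β = φ q⁻ᵐ`, and then the coefficient is `φ r⁻ᵐ [m - j] [j + 1]`. Dividing `fʲ v` by
`[j]!` gives the basis of `L(φ)`.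
-/

open Module Module.End Finset

namespace Module.End

section CommRing

variable {R M : Type*} [CommRing R] [AddCommGroup M] [Module R M]

lemma apply_mem_eigenspace_of_mul_eq_smul_mul {W T : End R M} {p μ : R}
    (h : W * T = p • (T * W)) {v : M} (hv : v ∈ W.eigenspace μ) :
    T v ∈ W.eigenspace (p * μ) := by
  rw [mem_eigenspace_iff] at hv ⊢
  simpa only [mul_apply, LinearMap.smul_apply, hv, map_smul, smul_smul] using
    LinearMap.congr_fun h v

lemma pow_apply_mem_eigenspace_of_mul_eq_smul_mul {W T : End R M} {p μ : R}
    (h : W * T = p • (T * W)) {v : M} (hv : v ∈ W.eigenspace μ) (n : ℕ) :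
    (T ^ n) v ∈ W.eigenspace (p ^ n * μ) := by
  induction n with
  | zero => simpa using hv
  | succ n ih =>
    rw [pow_succ' T, mul_apply, pow_succ', mul_assoc]
    exact apply_mem_eigenspace_of_mul_eq_smul_mul h ih

lemma apply_pow_succ_apply_eq_sum_smul {E F W W' : End R M} {κ : R}
    (hEF : E * F - F * E = κ • (W - W')) {v : M} (hv : E v = 0) {a b : ℕ → R}
    (ha : ∀ i, W ((F ^ i) v) = a i • (F ^ i) v) (hb : ∀ i, W' ((F ^ i) v) = b i • (F ^ i) v)
    (j : ℕ) : E ((F ^ (j + 1)) v) = (κ * ∑ i ∈ range (j + 1), (a i - b i)) • (F ^ j) v := by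
  have hEFx (x : M) : E (F x) = F (E x) + κ • (W x - W' x) := by
    rw [← sub_eq_iff_eq_add']
    simpa using LinearMap.congr_fun hEF x
  induction j with
  | zero =>
    have ha0 : W v = a 0 • v := by simpa using ha 0
    have hb0 : W' v = b 0 • v := by simpa using hb 0
    rw [zero_add, pow_one, hEFx, hv, map_zero, zero_add, ha0, hb0, sum_range_one, pow_zero,
      one_apply]
    module
  | succ j ih =>
    rw [pow_succ' F, mul_apply, hEFx, ih, map_smul, ha, hb, ← mul_apply, ← pow_succ',
      sum_range_succ _ (j + 1)]
    module

end CommRing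

variable {K M : Type*} [Field K] [AddCommGroup M] [Module K M]

lemma pow_apply_eq_zero_of_finrank_le [FiniteDimensional K M] {W T : End K M} {p μ : K}
    (hp : Function.Injective (p ^ · : ℕ → K)) (hμ : μ ≠ 0) (h : W * T = p • (T * W)) {v : M}
    (hv : v ∈ W.eigenspace μ) {n : ℕ} (hn : finrank K M ≤ n) : (T ^ n) v = 0 := by
  by_contra hne
  have hvec (i : Fin (n + 1)) : W.HasEigenvector (p ^ (i : ℕ) * μ) ((T ^ (i : ℕ)) v) := by
    refine ⟨pow_apply_mem_eigenspace_of_mul_eq_smul_mul h hv i, fun hi => hne ?_⟩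
    rw [← Nat.sub_add_cancel (Nat.lt_succ_iff.mp i.isLt), pow_add, mul_apply, hi, map_zero]
  have hinj : Function.Injective (fun i : Fin (n + 1) => p ^ (i : ℕ) * μ) := fun a b hab =>
    Fin.ext (hp (mul_right_cancel₀ hμ hab))
  have := (eigenvectors_linearIndependent' W _ hinj _ hvec).fintype_card_le_finrank
  rw [Fintype.card_fin] at this
  omega

lemma exists_hasEigenvalue_not_hasEigenvalue_mul [IsAlgClosed K] [FiniteDimensional K M]
    [Nontrivial M] {W : End K M} (hW : Function.Injective W) {p : K}
    (hp : Function.Injective (p ^ · : ℕ → K)) :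
    ∃ μ, W.HasEigenvalue μ ∧ ¬ W.HasEigenvalue (p * μ) := by
  obtain ⟨μ₀, hμ₀⟩ := W.exists_eigenvalue
  have hμ₀0 : μ₀ ≠ 0 := by
    rintro rfl
    obtain ⟨x, hx⟩ := hμ₀.exists_hasEigenvector
    exact hx.2 (hW (by rw [hx.apply_eq_smul, zero_smul, map_zero]))
  have hfin : {n : ℕ | W.HasEigenvalue (p ^ n * μ₀)}.Finite :=
    (finite_hasEigenvalue W).preimage fun a _ b _ hab => hp (mul_right_cancel₀ hμ₀0 hab)
  obtain ⟨n, hn, hmax⟩ := Set.exists_max_image _ id hfin ⟨0, by simpa using hμ₀⟩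
  exact ⟨p ^ n * μ₀, hn, fun h => n.not_succ_le_self
    (hmax (n + 1) (by rwa [Set.mem_ofPred_eq, pow_succ', mul_assoc]))⟩

lemma exists_eigenvector_of_commute_of_mul_eq_smul_mul [IsAlgClosed K] [FiniteDimensional K M]
    [Nontrivial M] {W W' E : End K M} (hW : Function.Injective W) (hWW' : Commute W W') {p : K}
    (hp : Function.Injective (p ^ · : ℕ → K)) (hWE : W * E = p • (E * W)) :
    ∃ v ≠ 0, ∃ μ β : K, W v = μ • v ∧ W' v = β • v ∧ E v = 0 := by
  obtain ⟨μ, hμ, hpμ⟩ := exists_hasEigenvalue_not_hasEigenvalue_mul hW hp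
  have hmaps : ∀ x ∈ W.eigenspace μ, W' x ∈ W.eigenspace μ :=
    fun x hx => mapsTo_genEigenspace_of_comm hWW' μ 1 hx
  have : Nontrivial (W.eigenspace μ) := Submodule.nontrivial_iff_ne_bot.mpr hμ
  obtain ⟨β, hβ⟩ := exists_eigenvalue (W'.restrict hmaps)
  obtain ⟨⟨v, hvμ⟩, hv⟩ := hβ.exists_hasEigenvector
  refine ⟨v, fun h => hv.2 (Subtype.ext h), μ, β, mem_eigenspace_iff.mp hvμ,
    congrArg Subtype.val hv.apply_eq_smul, ?_⟩
  have hEv := apply_mem_eigenspace_of_mul_eq_smul_mul hWE hvμ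
  rwa [not_ne_iff.mp (hasEigenvalue_iff.not.mp hpμ), Submodule.mem_bot] at hEv

end Module.End

lemma Submodule.le_comap_of_mul_eq_one {K M : Type*} [Field K] [AddCommGroup M] [Module K M]
    {N : Submodule K M} [FiniteDimensional K N] {T T' : End K M} (hT'T : T' * T = 1)
    (hT : N ≤ N.comap T) : N ≤ N.comap T' := by
  have hT'T_apply (x : M) : T' (T x) = x := by rw [← mul_apply, hT'T, one_apply]
  have hinj : Function.Injective (T.restrict hT) := fun x y hxy =>
    Subtype.ext (Function.LeftInverse.injective hT'T_apply (congrArg Subtype.val hxy))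
  intro x hx
  obtain ⟨y, hy⟩ := LinearMap.injective_iff_surjective.mp hinj ⟨x, hx⟩
  have hxy : x = T y := (congrArg Subtype.val hy).symm
  rw [Submodule.mem_comap, hxy, hT'T_apply]
  exact y.2

section Scalars

variable {K : Type*} [Field K]

lemma pow_ne_one_of_zpow_eq_one {q : K} (hq : ∀ k : ℤ, q ^ k = 1 → k = 0) {n : ℕ} (hn : n ≠ 0) :
    q ^ n ≠ 1 := fun h => hn (by exact_mod_cast hq n (by rwa [zpow_natCast]))

lemma pow_injective_of_zpow_eq_one {q : K} (hq0 : q ≠ 0) (hq : ∀ k : ℤ, q ^ k = 1 → k = 0) :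
    Function.Injective (q ^ · : ℕ → K) := by
  intro a b hab
  have := hq (a - b) (by
    rw [zpow_sub₀ hq0, zpow_natCast, zpow_natCast, div_eq_one_iff_eq (pow_ne_zero _ hq0)]
    exact hab)
  omega

lemma sum_range_succ_inv_pow {q : K} (hq : q ≠ 0) (m : ℕ) :
    ∑ i ∈ range (m + 1), q⁻¹ ^ i = q⁻¹ ^ m * ∑ i ∈ range (m + 1), q ^ i := by
  rw [mul_sum, ← sum_range_reflect]
  refine sum_congr rfl fun i hi => ?_
  rw [Nat.add_sub_cancel, pow_sub₀ _ (inv_ne_zero hq) (Nat.lt_succ_iff.mp (mem_range.mp hi)),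
    inv_pow, inv_pow, inv_inv]

lemma eq_mul_zpow_of_sum_range_eq_zero {q φ β : K} (hq0 : q ≠ 0) {m : ℕ} (hqm : q ^ (m + 1) ≠ 1)
    (h : ∑ i ∈ range (m + 1), (φ * q ^ (-(i : ℤ)) - β * q ^ i) = 0) :
    β = φ * q ^ (-(m : ℤ)) := by
  have hgeom : ∑ i ∈ range (m + 1), q ^ i ≠ 0 := fun h0 =>
    hqm (sub_eq_zero.mp (by rw [← geom_sum_mul, h0, zero_mul]))
  -- `h` says `φ [m+1]_{q⁻¹} = β [m+1]_q`, and `[m+1]_{q⁻¹} = q⁻ᵐ [m+1]_q`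
  simp only [zpow_neg, zpow_natCast, ← inv_pow, sum_sub_distrib, ← mul_sum,
    sum_range_succ_inv_pow hq0, sub_eq_zero] at h ⊢
  exact mul_right_cancel₀ hgeom (by rw [← h]; ring)

end Scalars

section QuantumIntegers

variable {𝕂 : Type} [Field 𝕂] {r s : 𝕂}

def qFactorial (r s : 𝕂) (n : ℕ) : 𝕂 := ∏ i ∈ range n, qInt r s (i + 1)

lemma qFactorial_succ (n : ℕ) : qFactorial r s (n + 1) = qFactorial r s n * qInt r s (n + 1) :=
  prod_range_succ _ n

lemma ne_of_forall_zpow_eq_one (hs : s ≠ 0) (hroot : ∀ k : ℤ, (r * s⁻¹) ^ k = 1 → k = 0) :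
    r ≠ s := fun h =>
  pow_ne_one_of_zpow_eq_one hroot one_ne_zero (by rw [h, pow_one, mul_inv_cancel₀ hs])

lemma qInt_ne_zero (hs : s ≠ 0) (hroot : ∀ k : ℤ, (r * s⁻¹) ^ k = 1 → k = 0) {n : ℕ}
    (hn : n ≠ 0) : qInt r s n ≠ 0 := by
  have h := pow_ne_one_of_zpow_eq_one hroot hn
  refine div_ne_zero (fun hpow => h ?_) (fun hrs => h ?_)
  · rw [mul_pow, inv_pow, sub_eq_zero.mp hpow, mul_inv_cancel₀ (pow_ne_zero _ hs)]
  · rw [sub_eq_zero.mp hrs, mul_inv_cancel₀ hs, one_pow]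

lemma qFactorial_ne_zero (hs : s ≠ 0) (hroot : ∀ k : ℤ, (r * s⁻¹) ^ k = 1 → k = 0) (n : ℕ) :
    qFactorial r s n ≠ 0 :=
  prod_ne_zero_iff.mpr fun i _ => qInt_ne_zero hs hroot i.succ_ne_zero

lemma inv_sub_mul_sum_eq_zpow_mul_qInt_mul_qInt (hr : r ≠ 0) (hs : s ≠ 0) (hrs : r ≠ s)
    {j m : ℕ} (hjm : j < m) :
    (r - s)⁻¹ * ∑ i ∈ range (j + 1),
        ((r * s⁻¹) ^ (-(i : ℤ)) - (r * s⁻¹) ^ (-(m : ℤ)) * (r * s⁻¹) ^ i) =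
      r ^ (-(m : ℤ)) * qInt r s (m - j) * qInt r s (j + 1) := by
  obtain ⟨k, rfl⟩ := Nat.exists_eq_add_of_lt hjm
  have hsr1 : s / r ≠ 1 := fun h => hrs ((div_eq_one_iff_eq hr).mp h).symm
  have hrs1 : r / s ≠ 1 := fun h => hrs ((div_eq_one_iff_eq hs).mp h)
  have hzpow (i : ℕ) : (r * s⁻¹) ^ (-(i : ℤ)) = (s / r) ^ i := by
    rw [zpow_neg, zpow_natCast, ← inv_pow, mul_inv, inv_inv, div_eq_mul_inv, mul_comm]
  rw [sum_sub_distrib, ← mul_sum]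
  simp only [hzpow]
  rw [← div_eq_mul_inv r s, geom_sum_eq hsr1, geom_sum_eq hrs1,
    show j + k + 1 - j = k + 1 by omega, zpow_neg, zpow_natCast, qInt, qInt,
    div_pow, div_pow, div_pow, div_sub_one hr, div_sub_one hs]
  field_simp
  ring

end QuantumIntegers

namespace UGen

variable {𝕂 : Type} [Field 𝕂] {r s : 𝕂} {A : Type*} [Ring A] [Algebra 𝕂 A]
  (ρ : Ursl2 𝕂 r s →ₐ[𝕂] A)

lemma map_winv_mul_map_w : ρ (toU r s .winv) * ρ (toU r s .w) = 1 := by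
  simpa only [toU, map_mul, map_one] using
    congrArg ρ (RingQuot.mkAlgHom_rel 𝕂 (URel.winv_left (r := r) (s := s)))

lemma map_w'inv_mul_map_w' : ρ (toU r s .w'inv) * ρ (toU r s .w') = 1 := by
  simpa only [toU, map_mul, map_one] using
    congrArg ρ (RingQuot.mkAlgHom_rel 𝕂 (URel.w'inv_left (r := r) (s := s)))

lemma commute_map_w_map_w' : Commute (ρ (toU r s .w)) (ρ (toU r s .w')) := by
  simpa only [commute_iff_eq, toU, map_mul] using
    congrArg ρ (RingQuot.mkAlgHom_rel 𝕂 (URel.ww' (r := r) (s := s)))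

lemma map_w_mul_map_e :
    ρ (toU r s .w) * ρ (toU r s .e) = (r * s⁻¹) • (ρ (toU r s .e) * ρ (toU r s .w)) := by
  simpa only [toU, map_mul, map_smul] using
    congrArg ρ (RingQuot.mkAlgHom_rel 𝕂 (URel.we (r := r) (s := s)))

lemma map_w_mul_map_f :
    ρ (toU r s .w) * ρ (toU r s .f) = (r⁻¹ * s) • (ρ (toU r s .f) * ρ (toU r s .w)) := by
  simpa only [toU, map_mul, map_smul] using
    congrArg ρ (RingQuot.mkAlgHom_rel 𝕂 (URel.wf (r := r) (s := s)))

lemma map_w'_mul_map_f :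
    ρ (toU r s .w') * ρ (toU r s .f) = (r * s⁻¹) • (ρ (toU r s .f) * ρ (toU r s .w')) := by
  simpa only [toU, map_mul, map_smul] using
    congrArg ρ (RingQuot.mkAlgHom_rel 𝕂 (URel.w'f (r := r) (s := s)))

lemma map_e_mul_map_f_sub_map_f_mul_map_e :
    ρ (toU r s .e) * ρ (toU r s .f) - ρ (toU r s .f) * ρ (toU r s .e) =
      (r - s)⁻¹ • (ρ (toU r s .w) - ρ (toU r s .w')) := by
  simpa only [toU, map_mul, map_sub, map_smul] using
    congrArg ρ (RingQuot.mkAlgHom_rel 𝕂 (URel.ef (r := r) (s := s)))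

end UGen

section HighestWeight

variable {𝕂 : Type} [Field 𝕂] {r s : 𝕂} {M : Type} [AddCommGroup M] [Module 𝕂 M]

lemma Submodule.eq_top_of_le_comap_toU (ρ : Ursl2 𝕂 r s →ₐ[𝕂] End 𝕂 M)
    (hsimple : letI : Module (Ursl2 𝕂 r s) M := Module.compHom M ρ.toRingHom
      IsSimpleModule (Ursl2 𝕂 r s) M)
    {N : Submodule 𝕂 M} (hN : N ≠ ⊥) (h : ∀ g : UGen, N ≤ N.comap (ρ (g.toU r s))) :
    N = ⊤ := by
  let : Module (Ursl2 𝕂 r s) M := Module.compHom M ρ.toRingHom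
  have hρ (a : Ursl2 𝕂 r s) : N ≤ N.comap (ρ a) := by
    obtain ⟨x, rfl⟩ := RingQuot.mkAlgHom_surjective 𝕂 (URel 𝕂 r s) a
    induction x using FreeAlgebra.induction with
    | grade0 c =>
      intro v hv
      rw [Submodule.mem_comap, AlgHom.commutes, AlgHom.commutes, Module.algebraMap_end_apply]
      exact N.smul_mem c hv
    | grade1 g => exact h g
    | mul x y hx hy => exact fun v hv => by simpa using hx (hy hv)
    | add x y hx hy => exact fun v hv => by simpa using N.add_mem (hx hv) (hy hv)
  let N' : Submodule (Ursl2 𝕂 r s) M :=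
    { N with smul_mem' := fun a _ hv => hρ a hv }
  have : N' ≠ ⊥ := fun h' => hN (by
    rw [eq_bot_iff] at h' ⊢
    exact fun v hv => h' hv)
  have htop := (IsSimpleOrder.eq_bot_or_eq_top N').resolve_left this
  exact eq_top_iff.mpr fun v _ => show v ∈ N' by rw [htop]; trivial

structure IsHighestWeightVector (ρ : Ursl2 𝕂 r s →ₐ[𝕂] End 𝕂 M) (φ β : 𝕂) (v : M) : Prop where
  ne_zero : v ≠ 0
  w_apply : ρ (UGen.toU r s .w) v = φ • v
  w'_apply : ρ (UGen.toU r s .w') v = β • v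
  e_apply : ρ (UGen.toU r s .e) v = 0

lemma injective_map_toU_w (ρ : Ursl2 𝕂 r s →ₐ[𝕂] End 𝕂 M) :
    Function.Injective (ρ (UGen.toU r s .w)) :=
  Function.LeftInverse.injective (g := ρ (UGen.toU r s .winv)) fun x => by
    rw [← mul_apply, UGen.map_winv_mul_map_w, one_apply]

lemma exists_isHighestWeightVector [IsAlgClosed 𝕂] [FiniteDimensional 𝕂 M] [Nontrivial M]
    (ρ : Ursl2 𝕂 r s →ₐ[𝕂] End 𝕂 M) (hr : r ≠ 0) (hs : s ≠ 0)
    (hroot : ∀ k : ℤ, (r * s⁻¹) ^ k = 1 → k = 0) :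
    ∃ φ β v, IsHighestWeightVector ρ φ β v := by
  obtain ⟨v, hv, φ, β, hw, hw', he⟩ := exists_eigenvector_of_commute_of_mul_eq_smul_mul
    (injective_map_toU_w ρ) (UGen.commute_map_w_map_w' ρ)
    (pow_injective_of_zpow_eq_one (mul_ne_zero hr (inv_ne_zero hs)) hroot)
    (UGen.map_w_mul_map_e ρ)
  exact ⟨φ, β, v, hv, hw, hw', he⟩

namespace IsHighestWeightVector

variable {ρ : Ursl2 𝕂 r s →ₐ[𝕂] End 𝕂 M} {φ β : 𝕂} {v : M}

lemma weight_ne_zero (hv : IsHighestWeightVector ρ φ β v) : φ ≠ 0 := by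
  rintro rfl
  exact hv.ne_zero (injective_map_toU_w ρ (by rw [hv.w_apply, zero_smul, map_zero]))

lemma w_apply_pow (hv : IsHighestWeightVector ρ φ β v) (j : ℕ) :
    ρ (UGen.toU r s .w) ((ρ (UGen.toU r s .f) ^ j) v) =
      (φ * (r * s⁻¹) ^ (-(j : ℤ))) • (ρ (UGen.toU r s .f) ^ j) v := by
  have := pow_apply_mem_eigenspace_of_mul_eq_smul_mul (UGen.map_w_mul_map_f ρ)
    (mem_eigenspace_iff.mpr hv.w_apply) j
  rw [mem_eigenspace_iff.mp this, zpow_neg, zpow_natCast, ← inv_pow, mul_inv, inv_inv,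
    mul_comm φ]

lemma w'_apply_pow (hv : IsHighestWeightVector ρ φ β v) (j : ℕ) :
    ρ (UGen.toU r s .w') ((ρ (UGen.toU r s .f) ^ j) v) =
      (β * (r * s⁻¹) ^ j) • (ρ (UGen.toU r s .f) ^ j) v := by
  have := pow_apply_mem_eigenspace_of_mul_eq_smul_mul (UGen.map_w'_mul_map_f ρ)
    (mem_eigenspace_iff.mpr hv.w'_apply) j
  rw [mem_eigenspace_iff.mp this, mul_comm β]

lemma e_apply_pow_succ (hv : IsHighestWeightVector ρ φ β v) (j : ℕ) :
    ρ (UGen.toU r s .e) ((ρ (UGen.toU r s .f) ^ (j + 1)) v) =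
      ((r - s)⁻¹ * ∑ i ∈ range (j + 1), (φ * (r * s⁻¹) ^ (-(i : ℤ)) - β * (r * s⁻¹) ^ i)) •
        (ρ (UGen.toU r s .f) ^ j) v :=
  apply_pow_succ_apply_eq_sum_smul (UGen.map_e_mul_map_f_sub_map_f_mul_map_e ρ) hv.e_apply
    (a := fun i => φ * (r * s⁻¹) ^ (-(i : ℤ))) (b := fun i => β * (r * s⁻¹) ^ i)
    hv.w_apply_pow hv.w'_apply_pow j

lemma span_range_pow_apply_eq_top [FiniteDimensional 𝕂 M] (hv : IsHighestWeightVector ρ φ β v)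
    (hsimple : letI : Module (Ursl2 𝕂 r s) M := Module.compHom M ρ.toRingHom
      IsSimpleModule (Ursl2 𝕂 r s) M) :
    Submodule.span 𝕂 (Set.range fun j => (ρ (UGen.toU r s .f) ^ j) v) = ⊤ := by
  set N := Submodule.span 𝕂 (Set.range fun j => (ρ (UGen.toU r s .f) ^ j) v)
  have hmem (j : ℕ) : (ρ (UGen.toU r s .f) ^ j) v ∈ N := Submodule.subset_span ⟨j, rfl⟩
  have hle {T : End 𝕂 M} (hT : ∀ j, T ((ρ (UGen.toU r s .f) ^ j) v) ∈ N) : N ≤ N.comap T :=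
    Submodule.span_le.mpr (Set.range_subset_iff.mpr hT)
  have hw : N ≤ N.comap (ρ (UGen.toU r s .w)) :=
    hle fun j => by rw [hv.w_apply_pow]; exact N.smul_mem _ (hmem j)
  have hw' : N ≤ N.comap (ρ (UGen.toU r s .w')) :=
    hle fun j => by rw [hv.w'_apply_pow]; exact N.smul_mem _ (hmem j)
  refine Submodule.eq_top_of_le_comap_toU ρ hsimple
    (fun h => hv.ne_zero ((Submodule.mem_bot 𝕂).mp (h ▸ by simpa using hmem 0))) fun g => ?_
  cases g with
  | e => exact hle fun
      | 0 => by simp [hv.e_apply]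
      | j + 1 => by rw [hv.e_apply_pow_succ]; exact N.smul_mem _ (hmem j)
  | f => exact hle fun j => by rw [← mul_apply, ← pow_succ']; exact hmem (j + 1)
  | w => exact hw
  | winv => exact Submodule.le_comap_of_mul_eq_one (UGen.map_winv_mul_map_w ρ) hw
  | w' => exact hw'
  | w'inv => exact Submodule.le_comap_of_mul_eq_one (UGen.map_w'inv_mul_map_w' ρ) hw'

end IsHighestWeightVector

end HighestWeight

section DividedPowers

variable {𝕂 : Type} [Field 𝕂] {r s : 𝕂} {M : Type} [AddCommGroup M] [Module 𝕂 M]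

/-- The vector `v_j = fʲ v / [j]!` of `L(φ)`. -/
noncomputable def dividedPowF (ρ : Ursl2 𝕂 r s →ₐ[𝕂] End 𝕂 M) (v : M) (j : ℕ) : M :=
  (qFactorial r s j)⁻¹ • (ρ (UGen.toU r s .f) ^ j) v

lemma f_apply_dividedPowF (ρ : Ursl2 𝕂 r s →ₐ[𝕂] End 𝕂 M) (v : M) (hs : s ≠ 0)
    (hroot : ∀ k : ℤ, (r * s⁻¹) ^ k = 1 → k = 0) (j : ℕ) :
    ρ (UGen.toU r s .f) (dividedPowF ρ v j) = qInt r s (j + 1) • dividedPowF ρ v (j + 1) := by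
  rw [dividedPowF, dividedPowF, map_smul, ← mul_apply, ← pow_succ', smul_smul, qFactorial_succ]
  congr 1
  field_simp [qInt_ne_zero hs hroot j.succ_ne_zero, qFactorial_ne_zero hs hroot j]

namespace IsHighestWeightVector

variable {ρ : Ursl2 𝕂 r s →ₐ[𝕂] End 𝕂 M} {φ β : 𝕂} {v : M}

lemma pow_apply_eq_zero_of_finrank_le [FiniteDimensional 𝕂 M] (hv : IsHighestWeightVector ρ φ β v)
    (hr : r ≠ 0) (hs : s ≠ 0) (hroot : ∀ k : ℤ, (r * s⁻¹) ^ k = 1 → k = 0) {n : ℕ}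
    (hn : finrank 𝕂 M ≤ n) : (ρ (UGen.toU r s .f) ^ n) v = 0 := by
  have hinv : r⁻¹ * s = (r * s⁻¹)⁻¹ := by rw [mul_inv, inv_inv, mul_comm]
  refine Module.End.pow_apply_eq_zero_of_finrank_le ?_ hv.weight_ne_zero (UGen.map_w_mul_map_f ρ)
    (mem_eigenspace_iff.mpr hv.w_apply) hn
  rw [hinv]
  exact pow_injective_of_zpow_eq_one (inv_ne_zero (mul_ne_zero hr (inv_ne_zero hs)))
    fun k hk => neg_eq_zero.mp (hroot _ (by rwa [inv_zpow'] at hk))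

lemma top_le_span_dividedPowF [FiniteDimensional 𝕂 M] (hv : IsHighestWeightVector ρ φ β v)
    (hr : r ≠ 0) (hs : s ≠ 0) (hroot : ∀ k : ℤ, (r * s⁻¹) ^ k = 1 → k = 0)
    (hsimple : letI : Module (Ursl2 𝕂 r s) M := Module.compHom M ρ.toRingHom
      IsSimpleModule (Ursl2 𝕂 r s) M)
    {m : ℕ} (hdim : finrank 𝕂 M = m + 1) :
    ⊤ ≤ Submodule.span 𝕂 (Set.range fun i : Fin (m + 1) => dividedPowF ρ v i) := by
  rw [← hv.span_range_pow_apply_eq_top hsimple, Submodule.span_le]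
  rintro _ ⟨j, rfl⟩
  rcases lt_or_ge j (m + 1) with hj | hj
  · have hx : dividedPowF ρ v j ∈ Submodule.span 𝕂 (Set.range fun i : Fin (m + 1) =>
        dividedPowF ρ v i) := Submodule.subset_span ⟨⟨j, hj⟩, rfl⟩
    simpa [dividedPowF, smul_smul, mul_inv_cancel₀ (qFactorial_ne_zero hs hroot j)] using
      Submodule.smul_mem _ (qFactorial r s j) hx
  · simp [hv.pow_apply_eq_zero_of_finrank_le hr hs hroot (hdim.trans_le hj)]

lemma weight'_eq_weight_mul_zpow [FiniteDimensional 𝕂 M] (hv : IsHighestWeightVector ρ φ β v)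
    (hr : r ≠ 0) (hs : s ≠ 0) (hroot : ∀ k : ℤ, (r * s⁻¹) ^ k = 1 → k = 0)
    (hsimple : letI : Module (Ursl2 𝕂 r s) M := Module.compHom M ρ.toRingHom
      IsSimpleModule (Ursl2 𝕂 r s) M)
    {m : ℕ} (hdim : finrank 𝕂 M = m + 1) : β = φ * (r * s⁻¹) ^ (-(m : ℤ)) := by
  have hli := linearIndependent_of_top_le_span_of_card_eq_finrank
    (hv.top_le_span_dividedPowF hr hs hroot hsimple hdim) (by rw [Fintype.card_fin, hdim])
  have hvm : (ρ (UGen.toU r s .f) ^ m) v ≠ 0 := fun h =>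
    hli.ne_zero (Fin.last m) (by simp [dividedPowF, h])
  have he := hv.e_apply_pow_succ m
  rw [hv.pow_apply_eq_zero_of_finrank_le hr hs hroot hdim.le, map_zero, eq_comm, smul_eq_zero,
    or_iff_left hvm, mul_eq_zero, or_iff_right (inv_ne_zero (sub_ne_zero.mpr
      (ne_of_forall_zpow_eq_one hs hroot)))] at he
  exact eq_mul_zpow_of_sum_range_eq_zero (mul_ne_zero hr (inv_ne_zero hs))
    (pow_ne_one_of_zpow_eq_one hroot m.succ_ne_zero) he

lemma w_apply_dividedPowF (hv : IsHighestWeightVector ρ φ β v) (j : ℕ) :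
    ρ (UGen.toU r s .w) (dividedPowF ρ v j) =
      (φ * (r * s⁻¹) ^ (-(j : ℤ))) • dividedPowF ρ v j := by
  rw [dividedPowF, map_smul, hv.w_apply_pow, smul_comm]

lemma w'_apply_dividedPowF (hv : IsHighestWeightVector ρ φ β v) (hr : r ≠ 0) (hs : s ≠ 0)
    {m : ℕ} (hβ : β = φ * (r * s⁻¹) ^ (-(m : ℤ))) (j : ℕ) :
    ρ (UGen.toU r s .w') (dividedPowF ρ v j) =
      (φ * (r * s⁻¹) ^ (-((m : ℤ) - (j : ℤ)))) • dividedPowF ρ v j := by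
  rw [dividedPowF, map_smul, hv.w'_apply_pow, smul_comm, hβ, mul_assoc, ← zpow_natCast,
    ← zpow_add₀ (mul_ne_zero hr (inv_ne_zero hs)), neg_sub, neg_add_eq_sub]

lemma e_apply_dividedPowF_zero (hv : IsHighestWeightVector ρ φ β v) :
    ρ (UGen.toU r s .e) (dividedPowF ρ v 0) = 0 := by
  simp [dividedPowF, qFactorial, hv.e_apply]

lemma e_apply_dividedPowF_succ (hv : IsHighestWeightVector ρ φ β v) (hr : r ≠ 0) (hs : s ≠ 0)
    (hroot : ∀ k : ℤ, (r * s⁻¹) ^ k = 1 → k = 0) {m : ℕ} (hβ : β = φ * (r * s⁻¹) ^ (-(m : ℤ)))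
    {j : ℕ} (hj : j < m) :
    ρ (UGen.toU r s .e) (dividedPowF ρ v (j + 1)) =
      (φ * r ^ (-(m : ℤ)) * qInt r s (m - j)) • dividedPowF ρ v j := by
  have hsum : (r - s)⁻¹ * ∑ i ∈ range (j + 1),
      (φ * (r * s⁻¹) ^ (-(i : ℤ)) - φ * (r * s⁻¹) ^ (-(m : ℤ)) * (r * s⁻¹) ^ i) =
      φ * (r ^ (-(m : ℤ)) * qInt r s (m - j) * qInt r s (j + 1)) := by
    rw [← inv_sub_mul_sum_eq_zpow_mul_qInt_mul_qInt hr hs (ne_of_forall_zpow_eq_one hs hroot)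
      hj, mul_sum, mul_sum, mul_sum]
    exact sum_congr rfl fun i _ => by ring
  rw [dividedPowF, dividedPowF, map_smul, hv.e_apply_pow_succ, smul_smul, smul_smul, hβ, hsum,
    qFactorial_succ]
  congr 1
  field_simp [qInt_ne_zero hs hroot j.succ_ne_zero, qFactorial_ne_zero hs hroot j]

end IsHighestWeightVector

end DividedPowers

/-- Proposition 2.9(ii), classification part: over an algebraically closed field,
every simple `U_{r,s}(sl_2)`-module of `𝕂`-dimension `m+1` is isomorphic to `L(φ)`
for some nonzero `φ`, i.e. it has a basis `v_0, …, v_m` in which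
`ω.v_j = φ(rs⁻¹)⁻ʲ v_j`, `ω′.v_j = φ(rs⁻¹)^{−(m−j)} v_j`,
`e.v_j = φ r^{−m}[m+1−j] v_{j−1}` (`v_{−1} = 0`) and `f.v_j = [j+1] v_{j+1}`
(`v_{m+1} = 0`). -/
theorem stmt13 {𝕂 : Type} [Field 𝕂] [IsAlgClosed 𝕂] (r s : 𝕂) (hr : r ≠ 0) (hs : s ≠ 0)
    (hroot : ∀ k : ℤ, (r * s⁻¹) ^ k = 1 → k = 0) (m : ℕ)
    (M : Type) [AddCommGroup M] [Module 𝕂 M]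
    (ρ : Ursl2 𝕂 r s →ₐ[𝕂] Module.End 𝕂 M)
    (hdim : Module.finrank 𝕂 M = m + 1)
    (hsimple : letI : Module (Ursl2 𝕂 r s) M := Module.compHom M ρ.toRingHom
      IsSimpleModule (Ursl2 𝕂 r s) M) :
    ∃ φ : 𝕂, φ ≠ 0 ∧ ∃ b : Module.Basis (Fin (m + 1)) 𝕂 M,
      (∀ j : ℕ, j ≤ m → ρ (UGen.toU r s .w) (extb b j) =
        (φ * (r * s⁻¹) ^ (-(j : ℤ))) • extb b j) ∧
      (∀ j : ℕ, j ≤ m → ρ (UGen.toU r s .w') (extb b j) =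
        (φ * (r * s⁻¹) ^ (-((m : ℤ) - (j : ℤ)))) • extb b j) ∧
      (ρ (UGen.toU r s .e) (extb b 0) = 0) ∧
      (∀ j : ℕ, j + 1 ≤ m → ρ (UGen.toU r s .e) (extb b (j + 1)) =
        (φ * r ^ (-(m : ℤ)) * qInt r s (m - j)) • extb b j) ∧
      (∀ j : ℕ, j ≤ m → ρ (UGen.toU r s .f) (extb b j) =
        qInt r s (j + 1) • extb b (j + 1)) := by
  have : FiniteDimensional 𝕂 M := .of_finrank_pos (by omega)
  have : Nontrivial M := Module.nontrivial_of_finrank_pos (R := 𝕂) (by omega)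
  obtain ⟨φ, β, v, hv⟩ := exists_isHighestWeightVector ρ hr hs hroot
  have hβ := hv.weight'_eq_weight_mul_zpow hr hs hroot hsimple hdim
  let b := basisOfTopLeSpanOfCardEqFinrank _
    (hv.top_le_span_dividedPowF hr hs hroot hsimple hdim) (by rw [Fintype.card_fin, hdim])
  have hb : extb b = dividedPowF ρ v := funext fun j => by
    rw [extb]
    split_ifs with hj
    · simp [b]
    · simp [dividedPowF,
        hv.pow_apply_eq_zero_of_finrank_le hr hs hroot (hdim.trans_le (not_lt.mp hj))]
  refine ⟨φ, hv.weight_ne_zero, b, ?_, ?_, ?_, ?_, ?_⟩ <;> simp only [hb]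
  · exact fun j _ => hv.w_apply_dividedPowF j
  · exact fun j _ => hv.w'_apply_dividedPowF hr hs hβ j
  · exact hv.e_apply_dividedPowF_zero
  · exact fun j hj => hv.e_apply_dividedPowF_succ hr hs hroot hβ hj
  · exact fun j _ => f_apply_dividedPowF ρ v hs hroot j
end

section
/- (Corollary 2.3, rank-one case.) Let 𝕂 be an algebraically closed field of characteristic zero, and let r and s be nonzero elements of 𝕂 with rs⁻¹ not a root of unity. Then for every finite-dimensional U_{r,s}(sl_2)-module M, the 𝕂-linear operators on M given by the actions of e and of f are nilpotent. -/
/-!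
Since `ω` acts invertibly and `ω e ω⁻¹ = (rs⁻¹) e`, if `v` is an eigenvector of `e` for `μ`
then `ω v` is one for `(rs⁻¹)⁻¹ μ`. The finitely many eigenvalues of `e` are therefore stable
under multiplication by a nonzero scalar that is not a root of unity, so they are all `0`, and
over an algebraically closed field this makes `e` nilpotent. The same argument applies to `f`.
-/

open Polynomial

theorem eq_zero_of_finite_of_mul_mem {K : Type*} [Field K] {S : Set K} (hS : S.Finite)
    {c : K} (hc0 : c ≠ 0) (hc : ∀ n : ℕ, c ^ n = 1 → n = 0) (hmul : ∀ x ∈ S, c * x ∈ S)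
    {x : K} (hx : x ∈ S) : x = 0 := by
  by_contra hx0
  have horbit : ∀ n : ℕ, c ^ n * x ∈ S := by
    intro n
    induction n with
    | zero => simpa using hx
    | succ n ih => simpa [pow_succ', mul_assoc] using hmul _ ih
  obtain ⟨m, n, hmn, heq⟩ := hS.exists_lt_map_eq_of_forall_mem horbit
  have hpow : c ^ m * c ^ (n - m) = c ^ m * 1 := by
    rw [← pow_add, Nat.add_sub_cancel' hmn.le, mul_one, mul_right_cancel₀ hx0 heq]
  have := hc _ (mul_left_cancel₀ (pow_ne_zero m hc0) hpow)
  omega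

namespace Module.End

variable {K V : Type*} [Field K] [AddCommGroup V] [Module K V]

theorem HasEigenvalue.mul_of_mul_eq_smul_mul {A B : End K V} {c μ : K}
    (hB : Function.Injective B) (hAB : A * B = c • (B * A)) (hμ : A.HasEigenvalue μ) :
    A.HasEigenvalue (c * μ) := by
  obtain ⟨v, hv⟩ := hμ.exists_hasEigenvector
  refine hasEigenvalue_of_hasEigenvector (x := B v) ⟨?_, ?_⟩
  · rw [mem_eigenspace_iff, ← mul_apply, hAB, LinearMap.smul_apply, mul_apply, hv.apply_eq_smul,
      map_smul, smul_smul]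
  · exact (map_ne_zero_iff B hB).mpr hv.2

variable [FiniteDimensional K V] [IsAlgClosed K]

theorem isNilpotent_of_forall_hasEigenvalue_eq_zero {A : End K V}
    (h : ∀ μ, A.HasEigenvalue μ → μ = 0) : IsNilpotent A := by
  set p := minpoly K A
  have hsplits : p.Splits := IsAlgClosed.splits p
  have hroots : p.roots = Multiset.replicate p.natDegree 0 := by
    rw [hsplits.natDegree_eq_card_roots, Multiset.eq_replicate_card]
    exact fun μ hμ => h μ (hasEigenvalue_iff_isRoot.mpr (isRoot_of_mem_roots hμ))
  have hp : p = X ^ p.natDegree := by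
    rw [hsplits.eq_prod_roots_of_monic (minpoly.monic (Algebra.IsIntegral.isIntegral A)),
      hroots]
    simp
  have hA : aeval A p = 0 := minpoly.aeval K A
  rw [hp, map_pow, aeval_X] at hA
  exact ⟨_, hA⟩

theorem isNilpotent_of_mul_eq_smul_mul {A W : End K V} (hW : Function.Injective W)
    {q : K} (hq0 : q ≠ 0) (hq : ∀ n : ℕ, q ^ n = 1 → n = 0) (hWA : W * A = q • (A * W)) :
    IsNilpotent A := by
  have hAW : A * W = q⁻¹ • (W * A) := by rw [hWA, smul_smul, inv_mul_cancel₀ hq0, one_smul]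
  refine isNilpotent_of_forall_hasEigenvalue_eq_zero fun μ hμ =>
    eq_zero_of_finite_of_mul_mem A.finite_hasEigenvalue (inv_ne_zero hq0) ?_
      (fun ν hν => hν.mul_of_mul_eq_smul_mul hW hAW) hμ
  intro n hn
  exact hq n (by rwa [inv_pow, inv_eq_one] at hn)

end Module.End

namespace Ursl2

variable {𝕂 : Type} [Field 𝕂] (r s : 𝕂)

theorem winv_mul_w : UGen.toU r s .winv * UGen.toU r s .w = 1 := by
  simpa [UGen.toU] using RingQuot.mkAlgHom_rel 𝕂 (URel.winv_left (r := r) (s := s))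

theorem w_mul_e :
    UGen.toU r s .w * UGen.toU r s .e = (r * s⁻¹) • (UGen.toU r s .e * UGen.toU r s .w) := by
  simpa [UGen.toU] using RingQuot.mkAlgHom_rel 𝕂 (URel.we (r := r) (s := s))

theorem w_mul_f :
    UGen.toU r s .w * UGen.toU r s .f = (r⁻¹ * s) • (UGen.toU r s .f * UGen.toU r s .w) := by
  simpa [UGen.toU] using RingQuot.mkAlgHom_rel 𝕂 (URel.wf (r := r) (s := s))

end Ursl2

theorem stmt15_general {𝕂 : Type} [Field 𝕂] [IsAlgClosed 𝕂]
    (r s : 𝕂) (hr : r ≠ 0) (hs : s ≠ 0)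
    (hroot : ∀ k : ℤ, (r * s⁻¹) ^ k = 1 → k = 0)
    (M : Type) [AddCommGroup M] [Module 𝕂 M] [FiniteDimensional 𝕂 M]
    (ρ : Ursl2 𝕂 r s →ₐ[𝕂] Module.End 𝕂 M) :
    IsNilpotent (ρ (UGen.toU r s .e)) ∧ IsNilpotent (ρ (UGen.toU r s .f)) := by
  have hW : Function.Injective (ρ (UGen.toU r s .w)) := by
    refine Function.LeftInverse.injective (g := ρ (UGen.toU r s .winv)) fun v => ?_
    rw [← Module.End.mul_apply, ← map_mul, Ursl2.winv_mul_w, map_one, Module.End.one_apply]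
  have hq : ∀ n : ℕ, (r * s⁻¹) ^ n = 1 → n = 0 := fun n hn =>
    Int.ofNat_eq_zero.mp (hroot n (by rwa [zpow_natCast]))
  have hq' : ∀ n : ℕ, (r⁻¹ * s) ^ n = 1 → n = 0 := fun n hn =>
    hq n (by rwa [← inv_inv s, ← mul_inv, inv_pow, inv_eq_one] at hn)
  constructor
  · refine Module.End.isNilpotent_of_mul_eq_smul_mul hW (by simp [hr, hs]) hq ?_
    simpa using congrArg ρ (Ursl2.w_mul_e r s)
  · refine Module.End.isNilpotent_of_mul_eq_smul_mul hW (by simp [hr, hs]) hq' ?_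
    simpa using congrArg ρ (Ursl2.w_mul_f r s)

/-- Corollary 2.3 in rank one: over an algebraically closed field of characteristic
zero, if `rs⁻¹` is not a root of unity, then on every finite-dimensional
`U_{r,s}(sl_2)`-module `M` the actions of `e` and `f` are nilpotent operators. -/
theorem stmt15 {𝕂 : Type} [Field 𝕂] [IsAlgClosed 𝕂] [CharZero 𝕂]
    (r s : 𝕂) (hr : r ≠ 0) (hs : s ≠ 0)
    (hroot : ∀ k : ℤ, (r * s⁻¹) ^ k = 1 → k = 0)
    (M : Type) [AddCommGroup M] [Module 𝕂 M] [FiniteDimensional 𝕂 M]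
    (ρ : Ursl2 𝕂 r s →ₐ[𝕂] Module.End 𝕂 M) :
    IsNilpotent (ρ (UGen.toU r s .e)) ∧ IsNilpotent (ρ (UGen.toU r s .f)) :=
  stmt15_general r s hr hs hroot M ρ
end

section
/- (Key step of Lemma 2.7 in rank one.) Let 𝕂 be an algebraically closed field of characteristic zero, r and s nonzero in 𝕂 with rs⁻¹ not a root of unity. Let M be a finite-dimensional U_{r,s}(sl_2)-module and suppose v ∈ M is nonzero with e.v = 0, ω.v = φ·v and ω′.v = φ′·v for some nonzero φ, φ′ ∈ 𝕂. Then there exists an integer m ≥ 0 such that φ′ = φ·(rs⁻¹)^{−m}; that is, a highest weight vector of a finite-dimensional module has dominant weight. -/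
/-- Auxiliary sequence: `(r−s)` times the coefficient in `e·fᵏ·v = cₖ·f^{k−1}·v`. -/
def dseq {𝕂 : Type} [Field 𝕂] (r s φ φ' : 𝕂) : ℕ → 𝕂
  | 0 => 0
  | k+1 => dseq r s φ φ' k + (r⁻¹*s)^k * φ - (r*s⁻¹)^k * φ'

lemma dstep {𝕂 : Type} [Field 𝕂] {t u d d' φ φ' : 𝕂} (ht : t ≠ 0) (hu : u ≠ 0)
    (hd' : d' = d + (t*u)⁻¹*φ - (t*u)*φ')
    (ih : d * (t-1) * u = (t*u - 1) * (φ - u*φ')) :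
    d' * (t-1) * (t*u) = (t*(t*u) - 1) * (φ - (t*u)*φ') := by
  subst hd'
  field_simp
  linear_combination t * ih

lemma dseq_closed {𝕂 : Type} [Field 𝕂] {r s : 𝕂} (hr : r ≠ 0) (hs : s ≠ 0)
    (φ φ' : 𝕂) (k : ℕ) :
    dseq r s φ φ' (k+1) * (r*s⁻¹ - 1) * (r*s⁻¹)^k
      = ((r*s⁻¹)^(k+1) - 1) * (φ - (r*s⁻¹)^k * φ') := by
  have ht0 : r * s⁻¹ ≠ 0 := mul_ne_zero hr (inv_ne_zero hs)
  have hti : r⁻¹ * s = (r * s⁻¹)⁻¹ := by rw [mul_inv, inv_inv, mul_comm]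
  induction k with
  | zero => simp [dseq]; ring
  | succ k ih =>
    have hd' : dseq r s φ φ' (k+2)
        = dseq r s φ φ' (k+1) + ((r*s⁻¹) * (r*s⁻¹)^k)⁻¹ * φ - ((r*s⁻¹) * (r*s⁻¹)^k) * φ' := by
      show dseq r s φ φ' (k+1) + (r⁻¹*s)^(k+1) * φ - (r*s⁻¹)^(k+1) * φ' = _
      rw [hti, inv_pow, pow_succ']
    rw [pow_succ'] at ih
    have := dstep ht0 (pow_ne_zero k ht0) hd' ih
    rw [pow_succ' (r*s⁻¹) (k+1), pow_succ' (r*s⁻¹) k]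
    exact this

/-- The main argument, for abstract operators satisfying the relevant relations. -/
lemma aux_hw {𝕂 M : Type} [Field 𝕂] [AddCommGroup M] [Module 𝕂 M] [FiniteDimensional 𝕂 M]
    {r s : 𝕂} (hr : r ≠ 0) (hs : s ≠ 0)
    (hroot : ∀ k : ℤ, (r * s⁻¹) ^ k = 1 → k = 0)
    (E F W W' : Module.End 𝕂 M)
    (hWF : W * F = (r⁻¹ * s) • (F * W))
    (hW'F : W' * F = (r * s⁻¹) • (F * W'))
    (hEF : E * F - F * E = (r - s)⁻¹ • (W - W'))
    (v : M) (hv : v ≠ 0) (φ φ' : 𝕂) (hφ : φ ≠ 0)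
    (hev : E v = 0) (hwv : W v = φ • v) (hw'v : W' v = φ' • v) :
    ∃ m : ℕ, φ' = φ * (r * s⁻¹) ^ (-(m : ℤ)) := by
  classical
  have ht0 : r * s⁻¹ ≠ 0 := mul_ne_zero hr (inv_ne_zero hs)
  have hti : r⁻¹ * s = (r * s⁻¹)⁻¹ := by rw [mul_inv, inv_inv, mul_comm]
  have hrs : r ≠ s := by
    intro h
    have h1 : (r * s⁻¹) ^ (1 : ℤ) = 1 := by rw [zpow_one, h, mul_inv_cancel₀ hs]
    simpa using hroot 1 h1
  -- pointwise forms of the relations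
  have hWFx : ∀ x : M, W (F x) = (r⁻¹ * s) • F (W x) := by
    intro x
    have h := DFunLike.congr_fun hWF x
    simpa [Module.End.mul_apply] using h
  have hW'Fx : ∀ x : M, W' (F x) = (r * s⁻¹) • F (W' x) := by
    intro x
    have h := DFunLike.congr_fun hW'F x
    simpa [Module.End.mul_apply] using h
  have hEFx : ∀ x : M, E (F x) = F (E x) + (r - s)⁻¹ • (W x - W' x) := by
    intro x
    have h := DFunLike.congr_fun hEF x
    simp only [LinearMap.sub_apply, Module.End.mul_apply, LinearMap.smul_apply] at h
    rw [sub_eq_iff_eq_add] at h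
    rw [h]
    abel
  -- weight of f^k v
  have hWk : ∀ k : ℕ, W ((F^k) v) = ((r⁻¹*s)^k * φ) • (F^k) v := by
    intro k
    induction k with
    | zero => simpa using hwv
    | succ k ih =>
      have hpow : (F^(k+1)) v = F ((F^k) v) := by
        rw [pow_succ', Module.End.mul_apply]
      rw [hpow, hWFx, ih, map_smul, smul_smul, ← hpow]
      congr 1
      rw [pow_succ']
      ring
  have hW'k : ∀ k : ℕ, W' ((F^k) v) = ((r*s⁻¹)^k * φ') • (F^k) v := by
    intro k
    induction k with
    | zero => simpa using hw'v
    | succ k ih =>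
      have hpow : (F^(k+1)) v = F ((F^k) v) := by
        rw [pow_succ', Module.End.mul_apply]
      rw [hpow, hW'Fx, ih, map_smul, smul_smul, ← hpow]
      congr 1
      rw [pow_succ']
      ring
  -- e on f^(k+1) v
  have hEk : ∀ k : ℕ, E ((F^(k+1)) v) = ((r-s)⁻¹ * dseq r s φ φ' (k+1)) • (F^k) v := by
    intro k
    induction k with
    | zero =>
      have hpow : (F^(0+1)) v = F v := by simp
      rw [hpow, hEFx, hev, map_zero, hwv, hw'v]
      have hd1 : dseq r s φ φ' 1 = φ - φ' := by simp [dseq]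
      rw [hd1]
      simp only [pow_zero, Module.End.one_apply, zero_add]
      module
    | succ k ih =>
      have hpow : (F^(k+2)) v = F ((F^(k+1)) v) := by
        rw [pow_succ', Module.End.mul_apply]
      rw [hpow, hEFx, ih, map_smul, hWk, hW'k]
      have hpow2 : F ((F^k) v) = (F^(k+1)) v := by rw [pow_succ', Module.End.mul_apply]
      rw [hpow2]
      show _ = ((r-s)⁻¹ * (dseq r s φ φ' (k+1) + (r⁻¹*s)^(k+1) * φ - (r*s⁻¹)^(k+1) * φ')) • _
      module
  -- f^n v = 0 for some n
  have hexist : ∃ n : ℕ, (F^n) v = 0 := by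
    by_contra hcon
    push_neg at hcon
    have hinj : Function.Injective (fun k : ℕ => (r⁻¹*s)^k * φ) := by
      intro a b hab
      simp only at hab
      have h1 : (r⁻¹*s)^a = (r⁻¹*s)^b := mul_right_cancel₀ hφ hab
      rw [hti, inv_pow, inv_pow, inv_inj] at h1
      have h2 : (r*s⁻¹) ^ ((a:ℤ) - (b:ℤ)) = 1 := by
        rw [zpow_sub₀ ht0, zpow_natCast, zpow_natCast, h1, div_self (pow_ne_zero b ht0)]
      have := hroot _ h2
      omega
    have hli : LinearIndependent 𝕂 (fun k : ℕ => (F^k) v) :=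
      W.eigenvectors_linearIndependent' (fun k : ℕ => (r⁻¹*s)^k * φ) hinj _
        (fun k => ⟨(Module.End.mem_eigenspace_iff).2 (hWk k), hcon k⟩)
    exact Module.Finite.not_linearIndependent_of_infinite _ hli
  -- minimal n
  have h0 : Nat.find hexist ≠ 0 := by
    intro h
    have := Nat.find_spec hexist
    rw [h] at this
    simp at this
    exact hv this
  obtain ⟨m, hm⟩ := Nat.exists_eq_succ_of_ne_zero h0
  have hzero : (F^(m+1)) v = 0 := by
    have h := Nat.find_spec hexist
    rwa [hm] at h
  have hne : (F^m) v ≠ 0 := Nat.find_min hexist (by omega)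
  have hEm := hEk m
  rw [hzero, map_zero] at hEm
  have hsc : (r-s)⁻¹ * dseq r s φ φ' (m+1) = 0 :=
    (smul_eq_zero.mp hEm.symm).resolve_right hne
  have hd0 : dseq r s φ φ' (m+1) = 0 :=
    (mul_eq_zero.mp hsc).resolve_left (inv_ne_zero (sub_ne_zero.mpr hrs))
  have hc := dseq_closed hr hs φ φ' m
  rw [hd0, zero_mul, zero_mul] at hc
  have hpow1 : (r*s⁻¹)^(m+1) - 1 ≠ 0 := by
    refine sub_ne_zero.mpr fun h => ?_
    have h1 : (r*s⁻¹) ^ ((m+1 : ℕ) : ℤ) = 1 := by rw [zpow_natCast]; exact h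
    have := hroot _ h1
    omega
  have hφeq : φ = (r*s⁻¹)^m * φ' :=
    sub_eq_zero.mp ((mul_eq_zero.mp hc.symm).resolve_left hpow1)
  refine ⟨m, ?_⟩
  rw [zpow_neg, zpow_natCast, hφeq]
  field_simp [pow_ne_zero m ht0]

/-- Key step of Lemma 2.7 in rank one: over an algebraically closed field of
characteristic zero, if `rs⁻¹` is not a root of unity, `M` is a finite-dimensional
`U_{r,s}(sl_2)`-module and `v ≠ 0` satisfies `e.v = 0`, `ω.v = φ·v`, `ω′.v = φ′·v`
with `φ, φ′` nonzero, then `φ′ = φ(rs⁻¹)^{−m}` for some integer `m ≥ 0`: a highest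
weight vector of a finite-dimensional module has dominant weight. -/
theorem stmt16 {𝕂 : Type} [Field 𝕂] [IsAlgClosed 𝕂] [CharZero 𝕂]
    (r s : 𝕂) (hr : r ≠ 0) (hs : s ≠ 0)
    (hroot : ∀ k : ℤ, (r * s⁻¹) ^ k = 1 → k = 0)
    (M : Type) [AddCommGroup M] [Module 𝕂 M] [FiniteDimensional 𝕂 M]
    (ρ : Ursl2 𝕂 r s →ₐ[𝕂] Module.End 𝕂 M)
    (v : M) (hv : v ≠ 0) (φ φ' : 𝕂) (hφ : φ ≠ 0) (hφ' : φ' ≠ 0)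
    (hev : ρ (UGen.toU r s .e) v = 0)
    (hwv : ρ (UGen.toU r s .w) v = φ • v)
    (hw'v : ρ (UGen.toU r s .w') v = φ' • v) :
    ∃ m : ℕ, φ' = φ * (r * s⁻¹) ^ (-(m : ℤ)) := by
  have urel : ∀ {x y : FreeAlgebra 𝕂 UGen}, URel 𝕂 r s x y →
      ρ (RingQuot.mkAlgHom 𝕂 (URel 𝕂 r s) x) = ρ (RingQuot.mkAlgHom 𝕂 (URel 𝕂 r s) y) :=
    fun h => congrArg ρ (RingQuot.mkAlgHom_rel 𝕂 h)
  have hWF : ρ (UGen.toU r s .w) * ρ (UGen.toU r s .f)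
      = (r⁻¹ * s) • (ρ (UGen.toU r s .f) * ρ (UGen.toU r s .w)) := by
    have h := urel URel.wf
    simp only [map_mul, map_smul] at h
    simpa only [UGen.toU] using h
  have hW'F : ρ (UGen.toU r s .w') * ρ (UGen.toU r s .f)
      = (r * s⁻¹) • (ρ (UGen.toU r s .f) * ρ (UGen.toU r s .w')) := by
    have h := urel URel.w'f
    simp only [map_mul, map_smul] at h
    simpa only [UGen.toU] using h
  have hEF : ρ (UGen.toU r s .e) * ρ (UGen.toU r s .f)
      - ρ (UGen.toU r s .f) * ρ (UGen.toU r s .e)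
      = (r - s)⁻¹ • (ρ (UGen.toU r s .w) - ρ (UGen.toU r s .w')) := by
    have h := urel URel.ef
    simp only [map_mul, map_smul, map_sub] at h
    simpa only [UGen.toU] using h
  exact aux_hw hr hs hroot _ _ _ _ hWF hW'F hEF v hv φ φ' hφ hev hwv hw'v
end
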